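/- arXiv:1707.07981 — 3 statements merged into one kernel-verified Lean document; each statement's English description precedes it below -/
import Mathlib

section
/- For every proper subset I ⊊ {1, …, n} (the empty set allowed), Ψ_I is a maximal closed subroot system of Φ, the affine root system of type D_{n+1}^{(2)}. -/
noncomputable section

variable {V : Type*} [NormedAddCommGroup V] [InnerProductSpace ℝ V]

/-- The Cartan pairing `⟨β, α∨⟩ = 2(β,α)/(α,α)`. -/
def cartanPair (α β : V) : ℝ := 2 * (inner ℝ β α : ℝ) / (inner ℝ α α : ℝ)

/-- The reflection `s_α` on `V`: `s_α(β) = β - ⟨β,α∨⟩ α`. -/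
def reflV (α β : V) : V := β - cartanPair α β • α

/-- The affine reflection `s_x` on `V × ℝ` with respect to the bilinear form
`B((x,a),(y,b)) = (x,y)`. -/
def reflA (x y : V × ℝ) : V × ℝ :=
  y - (2 * (inner ℝ y.1 x.1 : ℝ) / (inner ℝ x.1 x.1 : ℝ)) • x

/-- A finite irreducible reduced crystallographic root system in `V`. -/
structure IsIrreducibleRootSystem (R : Set V) : Prop where
  finite : R.Finite
  spans : Submodule.span ℝ R = ⊤
  zero_notMem : (0 : V) ∉ R
  reduced : ∀ α ∈ R, ∀ c : ℝ, c • α ∈ R → c = 1 ∨ c = -1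
  cartan_int : ∀ α ∈ R, ∀ β ∈ R, ∃ n : ℤ, cartanPair α β = (n : ℝ)
  refl_mem : ∀ α ∈ R, ∀ β ∈ R, reflV α β ∈ R
  irred : ∀ A B : Set V, R = A ∪ B → A.Nonempty → B.Nonempty →
    ∃ a ∈ A, ∃ b ∈ B, (inner ℝ a b : ℝ) ≠ 0

/-- A subroot system of a set `Φ` of affine roots: a nonempty proper subset stable
under the reflections `s_x`, `x ∈ Ψ`. -/
def IsSubrootSystem (Φ Ψ : Set (V × ℝ)) : Prop :=
  Ψ.Nonempty ∧ Ψ ⊆ Φ ∧ Ψ ≠ Φ ∧ ∀ x ∈ Ψ, ∀ y ∈ Ψ, reflA x y ∈ Ψ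

/-- `Ψ` is closed in `Φ`. -/
def IsClosedIn (Φ Ψ : Set (V × ℝ)) : Prop := ∀ x ∈ Ψ, ∀ y ∈ Ψ, x + y ∈ Φ → x + y ∈ Ψ

def IsClosedSubrootSystem (Φ Ψ : Set (V × ℝ)) : Prop :=
  IsSubrootSystem Φ Ψ ∧ IsClosedIn Φ Ψ

/-- A maximal closed subroot system of `Φ`: any closed subroot system of `Φ`
containing it equals it. -/
def IsMaximalClosedSubrootSystem (Φ Ψ : Set (V × ℝ)) : Prop :=
  IsClosedSubrootSystem Φ Ψ ∧ ∀ Δ, IsClosedSubrootSystem Φ Δ → Ψ ⊆ Δ → Δ = Ψ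

/-- A subroot system of a finite root system `R`. -/
def IsSubrootSystemF (R S : Set V) : Prop :=
  S.Nonempty ∧ S ⊆ R ∧ S ≠ R ∧ ∀ α ∈ S, ∀ β ∈ S, reflV α β ∈ S

/-- `S` is closed in the finite root system `R`. -/
def IsClosedInF (R S : Set V) : Prop := ∀ α ∈ S, ∀ β ∈ S, α + β ∈ R → α + β ∈ S

def IsMaximalClosedSubrootSystemF (R S : Set V) : Prop :=
  (IsSubrootSystemF R S ∧ IsClosedInF R S) ∧
    ∀ T, IsSubrootSystemF R T → IsClosedInF R T → S ⊆ T → T = S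

/-- A `ℤ`-linear function on `S`: the restriction to `S` of an additive group
homomorphism from the subgroup of `V` generated by `S` to `ℤ`. -/
def IsZLinearOn (S : Set V) (p : V → ℤ) : Prop :=
  ∃ f : AddSubgroup.closure S →+ ℤ,
    ∀ α, ∀ h : α ∈ S, p α = f ⟨α, AddSubgroup.subset_closure h⟩

/-- An irreducible subset: nonempty and not a union of two nonempty mutually
orthogonal subsets. -/
def IsIrreducibleSubset (S : Set V) : Prop :=
  S.Nonempty ∧ ∀ A B : Set V, S = A ∪ B → A.Nonempty → B.Nonempty →
    ∃ a ∈ A, ∃ b ∈ B, (inner ℝ a b : ℝ) ≠ 0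

/-- Euclidean space `ℝ^n`. -/
abbrev Euc (n : ℕ) := EuclideanSpace ℝ (Fin n)

/-- The standard basis vector `ε_i`. -/
def eps {n : ℕ} (i : Fin n) : Euc n := EuclideanSpace.single i 1

/-- `σ` is a sign. -/
def PM (σ : ℝ) : Prop := σ = 1 ∨ σ = -1

/-- The gradient of a set of affine roots (concrete case): vectors appearing as
the `ℝ^n`-component. -/
def GrC {n : ℕ} (Ψ : Set (Euc n × ℝ)) : Set (Euc n) := {v | ∃ c : ℝ, (v, c) ∈ Ψ}

/-- The affine root system of type `D_{n+1}^{(2)}`. -/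
def PhiD2 (n : ℕ) : Set (Euc n × ℝ) :=
  {x | (∃ i : Fin n, ∃ σ : ℝ, PM σ ∧ ∃ r : ℤ, x = (σ • eps i, (r : ℝ))) ∨
       (∃ i j : Fin n, i ≠ j ∧ ∃ σ τ : ℝ, PM σ ∧ PM τ ∧ ∃ r : ℤ,
          x = (σ • eps i + τ • eps j, ((2 * r : ℤ) : ℝ)))}

/-- The subset `Ψ_I` of `D_{n+1}^{(2)}` attached to `I ⊆ {1,…,n}`. -/
def PsiID2 (n : ℕ) (I : Set (Fin n)) : Set (Euc n × ℝ) :=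
  {x | (∃ s ∈ I, ∃ σ : ℝ, PM σ ∧ ∃ r : ℤ, x = (σ • eps s, ((2 * r : ℤ) : ℝ))) ∨
       (∃ s : Fin n, s ∉ I ∧ ∃ σ : ℝ, PM σ ∧ ∃ r : ℤ,
          x = (σ • eps s, ((2 * r + 1 : ℤ) : ℝ))) ∨
       (∃ s t : Fin n, s ≠ t ∧ ((s ∈ I ∧ t ∈ I) ∨ (s ∉ I ∧ t ∉ I)) ∧
          ∃ σ τ : ℝ, PM σ ∧ PM τ ∧ ∃ r : ℤ,
            x = (σ • eps s + τ • eps t, ((2 * r : ℤ) : ℝ)))}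

/-! A vector `v + cδ` is a root of `D_{n+1}^{(2)}` exactly when `v` is integral of squared length
`1` or `2` and `c` lies in `ℤ`, resp. `2ℤ`. In this description a reflection `s_x`, `x ∈ Φ`,
is `y ↦ y - k x` with `k ∈ ℤ` preserving lengths and the parity conditions, so `Φ` is
reflection-stable with integral coefficients. `Ψ_I` is the set of roots on which the linear form
`v + cδ ↦ c - ∑_{i ∉ I} vᵢ` is even; hence it is closed and reflection-stable, and `ε_t` with
`t ∉ I` shows that it is proper.

For maximality, a closed `Δ ⊋ Ψ_I` contains a short root outside `Ψ_I`. Adding suitable roots of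
`Ψ_I` moves such a root from `ε_s` to any `ε_u` with `u ≠ s`, and back to `ε_s` through a second
index; the long roots outside `Ψ_I` are then sums of these short roots and roots of `Ψ_I`, so
`Δ = Φ`. -/

open scoped RealInnerProductSpace

namespace PM

variable {σ : ℝ}

lemma one : PM 1 := Or.inl rfl

lemma neg (h : PM σ) : PM (-σ) := by
  rcases h with rfl | rfl <;> simp [PM]

lemma mul_self (h : PM σ) : σ * σ = 1 := by
  rcases h with rfl | rfl <;> norm_num

lemma exists_intCast (h : PM σ) : ∃ e : ℤ, (e = 1 ∨ e = -1) ∧ σ = e := by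
  rcases h with rfl | rfl
  · exact ⟨1, by norm_num⟩
  · exact ⟨-1, by norm_num⟩

end PM

variable {n : ℕ}

lemma eps_apply (i j : Fin n) : eps i j = if j = i then 1 else 0 := by
  simp [eps, PiLp.single_apply]

lemma inner_eps_eps (i j : Fin n) : ⟪eps i, eps j⟫ = if i = j then 1 else 0 := by
  simp [eps, EuclideanSpace.inner_single_left, PiLp.single_apply]

lemma inner_eps_right (v : Euc n) (i : Fin n) : ⟪v, eps i⟫ = v i := by
  simp [eps, EuclideanSpace.inner_single_right]

def IsIntVec (v : Euc n) : Prop := ∀ i, ∃ z : ℤ, v i = z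

namespace IsIntVec

variable {u v : Euc n}

lemma sub (hu : IsIntVec u) (hv : IsIntVec v) : IsIntVec (u - v) := fun i => by
  obtain ⟨a, ha⟩ := hu i
  obtain ⟨b, hb⟩ := hv i
  exact ⟨a - b, by simp [ha, hb]⟩

lemma add (hu : IsIntVec u) (hv : IsIntVec v) : IsIntVec (u + v) := fun i => by
  obtain ⟨a, ha⟩ := hu i
  obtain ⟨b, hb⟩ := hv i
  exact ⟨a + b, by simp [ha, hb]⟩

lemma intCast_smul (hv : IsIntVec v) (k : ℤ) : IsIntVec ((k : ℝ) • v) := fun i => by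
  obtain ⟨a, ha⟩ := hv i
  exact ⟨k * a, by simp [ha]⟩

lemma smul_eps {σ : ℝ} (hσ : PM σ) (i : Fin n) : IsIntVec (σ • eps i) := by
  obtain ⟨e, -, rfl⟩ := hσ.exists_intCast
  refine fun j => ⟨if j = i then e else 0, ?_⟩
  split_ifs with h <;> simp [eps_apply, h]

lemma exists_inner_eq (hu : IsIntVec u) (hv : IsIntVec v) : ∃ z : ℤ, ⟪u, v⟫ = z := by
  choose a ha using hu
  choose b hb using hv
  exact ⟨∑ i, a i * b i, by simp [PiLp.inner_apply, ha, hb, mul_comm]⟩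

end IsIntVec

lemma inner_self_eq_sum_sq (v : Euc n) : ⟪v, v⟫ = ∑ i, v i ^ 2 := by
  simp only [PiLp.inner_apply, RCLike.inner_apply, conj_trivial, sq]

lemma sq_apply_le_inner_self (v : Euc n) (i : Fin n) : v i ^ 2 ≤ ⟪v, v⟫ := by
  rw [inner_self_eq_sum_sq]
  exact Finset.single_le_sum (fun j _ => sq_nonneg (v j)) (Finset.mem_univ i)

lemma inner_self_sub_smul_eps (v : Euc n) (i : Fin n) :
    ⟪v - v i • eps i, v - v i • eps i⟫ = ⟪v, v⟫ - v i ^ 2 := by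
  simp only [inner_sub_left, inner_sub_right, real_inner_smul_left, real_inner_smul_right,
    inner_eps_right, real_inner_comm v (eps i), eps_apply, if_true]
  ring

lemma IsIntVec.exists_pm_apply {v : Euc n} (hv : IsIntVec v) (hv0 : v ≠ 0) (h : ⟪v, v⟫ < 4) :
    ∃ i, PM (v i) := by
  obtain ⟨i, hi⟩ : ∃ i, v i ≠ 0 := by
    by_contra! h0
    exact hv0 (PiLp.ext h0)
  obtain ⟨z, hz⟩ := hv i
  have hz0 : z ≠ 0 := by rintro rfl; simp_all
  have hz4 : (z : ℝ) ^ 2 < 4 := hz ▸ (sq_apply_le_inner_self v i).trans_lt h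
  norm_cast at hz4
  have hz1 : z = 1 ∨ z = -1 := by
    have : -2 < z ∧ z < 2 := ⟨by nlinarith, by nlinarith⟩
    omega
  exact ⟨i, by rcases hz1 with rfl | rfl <;> simp [PM, hz]⟩

lemma IsIntVec.eq_smul_eps_of_inner_self_eq_one {v : Euc n} (hv : IsIntVec v)
    (h : ⟪v, v⟫ = 1) : ∃ i σ, PM σ ∧ v = σ • eps i := by
  obtain ⟨i, hi⟩ := hv.exists_pm_apply (by rintro rfl; simp at h) (by linarith)
  refine ⟨i, v i, hi, ?_⟩
  have := inner_self_sub_smul_eps v i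
  rw [h, sq, hi.mul_self, sub_self, inner_self_eq_zero, sub_eq_zero] at this
  exact this

lemma IsIntVec.eq_add_of_inner_self_eq_two {v : Euc n} (hv : IsIntVec v)
    (h : ⟪v, v⟫ = 2) :
    ∃ i j, i ≠ j ∧ ∃ σ τ, PM σ ∧ PM τ ∧ v = σ • eps i + τ • eps j := by
  obtain ⟨i, hi⟩ := hv.exists_pm_apply (by rintro rfl; simp at h) (by linarith)
  have hw : ⟪v - v i • eps i, v - v i • eps i⟫ = 1 := by
    rw [inner_self_sub_smul_eps, h, sq, hi.mul_self]; norm_num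
  obtain ⟨j, τ, hτ, hj⟩ := (hv.sub (IsIntVec.smul_eps hi i)).eq_smul_eps_of_inner_self_eq_one hw
  refine ⟨i, j, ?_, v i, τ, hi, hτ, by rw [← hj]; abel⟩
  rintro rfl
  have := congrArg (fun w : Euc n => w i) hj
  rcases hτ with rfl | rfl <;> simp [eps_apply] at this

lemma inner_self_smul_eps {σ : ℝ} (hσ : PM σ) (i : Fin n) : ⟪σ • eps i, σ • eps i⟫ = 1 := by
  rw [real_inner_smul_left, real_inner_smul_right, inner_eps_eps, if_pos rfl]
  linear_combination hσ.mul_self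

lemma inner_self_smul_eps_add_smul_eps {i j : Fin n} (hij : i ≠ j) {σ τ : ℝ} (hσ : PM σ)
    (hτ : PM τ) : ⟪σ • eps i + τ • eps j, σ • eps i + τ • eps j⟫ = 2 := by
  simp only [inner_add_left, inner_add_right, real_inner_smul_left, real_inner_smul_right,
    inner_eps_eps, if_neg hij, if_neg hij.symm, ↓reduceIte]
  linear_combination hσ.mul_self + hτ.mul_self

lemma mem_PhiD2_iff {x : Euc n × ℝ} :
    x ∈ PhiD2 n ↔
      IsIntVec x.1 ∧ ∃ c : ℤ, x.2 = c ∧ (⟪x.1, x.1⟫ = 1 ∨ ⟪x.1, x.1⟫ = 2 ∧ Even c) := by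
  constructor
  · rintro (⟨i, σ, hσ, r, rfl⟩ | ⟨i, j, hij, σ, τ, hσ, hτ, r, rfl⟩)
    · exact ⟨.smul_eps hσ i, r, rfl, Or.inl (inner_self_smul_eps hσ i)⟩
    · exact ⟨(IsIntVec.smul_eps hσ i).add (.smul_eps hτ j), 2 * r, rfl,
        Or.inr ⟨inner_self_smul_eps_add_smul_eps hij hσ hτ, even_two_mul r⟩⟩
  · rintro ⟨hv, c, hc, h1 | ⟨h2, r, rfl⟩⟩
    · obtain ⟨i, σ, hσ, hx⟩ := hv.eq_smul_eps_of_inner_self_eq_one h1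
      exact Or.inl ⟨i, σ, hσ, c, Prod.ext hx hc⟩
    · obtain ⟨i, j, hij, σ, τ, hσ, hτ, hx⟩ := hv.eq_add_of_inner_self_eq_two h2
      exact Or.inr ⟨i, j, hij, σ, τ, hσ, hτ, r, Prod.ext hx (by rw [hc]; push_cast; ring)⟩

lemma reflA_eq_sub_cartanPair_smul (x y : V × ℝ) : reflA x y = y - cartanPair x.1 y.1 • x :=
  rfl

lemma IsIntVec.exists_cartanPair_eq {u v : Euc n} (hu : IsIntVec u) (hv : IsIntVec v)
    (h : ⟪u, u⟫ = 1 ∨ ⟪u, u⟫ = 2) : ∃ k : ℤ, cartanPair u v = k ∧ (⟪u, u⟫ = 1 → Even k) := by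
  obtain ⟨g, hg⟩ := hv.exists_inner_eq hu
  rcases h with h | h
  · exact ⟨2 * g, by rw [cartanPair, hg, h]; push_cast; ring, fun _ => even_two_mul g⟩
  · exact ⟨g, by rw [cartanPair, hg, h]; ring, by rw [h]; norm_num⟩

lemma reflA_mem_PhiD2 {x y : Euc n × ℝ} (hx : x ∈ PhiD2 n) (hy : y ∈ PhiD2 n) :
    reflA x y ∈ PhiD2 n := by
  obtain ⟨hu, a, ha, hxn⟩ := mem_PhiD2_iff.mp hx
  obtain ⟨hv, b, hb, hyn⟩ := mem_PhiD2_iff.mp hy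
  have hu0 : ⟪x.1, x.1⟫ ≠ 0 := by rcases hxn with h | ⟨h, -⟩ <;> rw [h] <;> norm_num
  obtain ⟨k, hk, hk_even⟩ := hu.exists_cartanPair_eq hv (hxn.imp_right And.left)
  have hkx : k * ⟪x.1, x.1⟫ = 2 * ⟪y.1, x.1⟫ := by
    rw [← hk, cartanPair, div_mul_cancel₀ _ hu0]
  have hnorm : ⟪y.1 - (k : ℝ) • x.1, y.1 - (k : ℝ) • x.1⟫ = ⟪y.1, y.1⟫ := by
    simp only [inner_sub_left, inner_sub_right, real_inner_smul_left, real_inner_smul_right,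
      real_inner_comm y.1 x.1]
    linear_combination k * hkx
  rw [reflA_eq_sub_cartanPair_smul, hk, mem_PhiD2_iff]
  refine ⟨hv.sub (hu.intCast_smul k), b - k * a, by simp [ha, hb], ?_⟩
  simp only [Prod.fst_sub, Prod.smul_fst, hnorm]
  refine hyn.imp_right fun ⟨h2, hb_even⟩ => ⟨h2, hb_even.sub ?_⟩
  rcases hxn with h1 | ⟨-, ha_even⟩
  · exact (hk_even h1).mul_right a
  · exact ha_even.mul_left k

lemma exists_cartanPair_eq_of_mem_PhiD2 {x y : Euc n × ℝ} (hx : x ∈ PhiD2 n)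
    (hy : y ∈ PhiD2 n) : ∃ k : ℤ, cartanPair x.1 y.1 = k := by
  obtain ⟨hu, _, -, hxn⟩ := mem_PhiD2_iff.mp hx
  obtain ⟨k, hk, -⟩ := hu.exists_cartanPair_eq (mem_PhiD2_iff.mp hy).1 (hxn.imp_right And.left)
  exact ⟨k, hk⟩

open Classical in
/-- The short roots of `Ψ_I` with gradient `±ε_i` are those whose constant term is congruent to
`shortParity I i` modulo `2`. -/
def shortParity (I : Set (Fin n)) (i : Fin n) : ℤ := if i ∈ I then 0 else 1

lemma shortParity_of_mem {I : Set (Fin n)} {i : Fin n} (h : i ∈ I) : shortParity I i = 0 := by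
  simp [shortParity, h]

lemma shortParity_of_notMem {I : Set (Fin n)} {i : Fin n} (h : i ∉ I) : shortParity I i = 1 := by
  simp [shortParity, h]

lemma shortParity_eq_zero_or_one (I : Set (Fin n)) (i : Fin n) :
    shortParity I i = 0 ∨ shortParity I i = 1 := by
  by_cases h : i ∈ I
  · exact Or.inl (shortParity_of_mem h)
  · exact Or.inr (shortParity_of_notMem h)

/-- `v + cδ ↦ c - ∑_{i ∉ I} vᵢ` -/
def parityForm (I : Set (Fin n)) : Euc n × ℝ →ₗ[ℝ] ℝ :=
  LinearMap.snd ℝ (Euc n) ℝ -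
    (innerₗ (Euc n) (WithLp.toLp 2 fun i => (shortParity I i : ℝ))).comp (LinearMap.fst ℝ _ _)

lemma parityForm_smul_eps (I : Set (Fin n)) (e : ℤ) (s : Fin n) (c : ℤ) :
    parityForm I ((e : ℝ) • eps s, (c : ℝ)) = ((c - e * shortParity I s : ℤ) : ℝ) := by
  simp [parityForm, inner_eps_right]

lemma parityForm_smul_eps_add_smul_eps (I : Set (Fin n)) (e f : ℤ) (s t : Fin n) (c : ℤ) :
    parityForm I ((e : ℝ) • eps s + (f : ℝ) • eps t, (c : ℝ)) =
      ((c - e * shortParity I s - f * shortParity I t : ℤ) : ℝ) := by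
  simp [parityForm, inner_add_right, real_inner_smul_right, inner_eps_right]
  ring

lemma exists_intCast_eq_two_mul_iff (z : ℤ) : (∃ m : ℤ, (z : ℝ) = 2 * m) ↔ 2 ∣ z :=
  ⟨fun ⟨m, h⟩ => ⟨m, by exact_mod_cast h⟩, fun ⟨m, h⟩ => ⟨m, by rw [h]; push_cast; ring⟩⟩

variable {I : Set (Fin n)}

lemma PsiID2_subset_PhiD2 : PsiID2 n I ⊆ PhiD2 n := by
  rintro _ (⟨s, -, σ, hσ, r, rfl⟩ | ⟨s, -, σ, hσ, r, rfl⟩ | ⟨s, t, hst, -, σ, τ, hσ, hτ, r, rfl⟩)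
  · exact Or.inl ⟨s, σ, hσ, _, rfl⟩
  · exact Or.inl ⟨s, σ, hσ, _, rfl⟩
  · exact Or.inr ⟨s, t, hst, σ, τ, hσ, hτ, r, rfl⟩

lemma exists_parityForm_eq_of_mem_PsiID2 {x : Euc n × ℝ} (hx : x ∈ PsiID2 n I) :
    ∃ m : ℤ, parityForm I x = 2 * m := by
  rcases hx with ⟨s, hs, σ, hσ, r, rfl⟩ | ⟨s, hs, σ, hσ, r, rfl⟩ |
    ⟨s, t, -, hst_side, σ, τ, hσ, hτ, r, rfl⟩
  · obtain ⟨e, -, rfl⟩ := hσ.exists_intCast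
    rw [parityForm_smul_eps, shortParity_of_mem hs, exists_intCast_eq_two_mul_iff]
    omega
  · obtain ⟨e, he, rfl⟩ := hσ.exists_intCast
    rw [parityForm_smul_eps, shortParity_of_notMem hs, exists_intCast_eq_two_mul_iff]
    omega
  · obtain ⟨e, he, rfl⟩ := hσ.exists_intCast
    obtain ⟨f, hf, rfl⟩ := hτ.exists_intCast
    rw [parityForm_smul_eps_add_smul_eps, exists_intCast_eq_two_mul_iff]
    rcases hst_side with ⟨hs, ht⟩ | ⟨hs, ht⟩
    · rw [shortParity_of_mem hs, shortParity_of_mem ht]; omega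
    · rw [shortParity_of_notMem hs, shortParity_of_notMem ht]; omega

lemma mem_PsiID2_of_parityForm_eq {x : Euc n × ℝ} (hx : x ∈ PhiD2 n)
    (hm : ∃ m : ℤ, parityForm I x = 2 * m) : x ∈ PsiID2 n I := by
  rcases hx with ⟨s, σ, hσ, r, rfl⟩ | ⟨s, t, hst, σ, τ, hσ, hτ, r, rfl⟩
  · obtain ⟨e, he, rfl⟩ := hσ.exists_intCast
    rw [parityForm_smul_eps, exists_intCast_eq_two_mul_iff] at hm
    by_cases hs : s ∈ I
    · rw [shortParity_of_mem hs] at hm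
      obtain ⟨m, rfl⟩ : ∃ m, r = 2 * m := ⟨r / 2, by omega⟩
      exact Or.inl ⟨s, hs, _, hσ, m, rfl⟩
    · rw [shortParity_of_notMem hs] at hm
      obtain ⟨m, rfl⟩ : ∃ m, r = 2 * m + 1 := ⟨r / 2, by omega⟩
      exact Or.inr (Or.inl ⟨s, hs, _, hσ, m, rfl⟩)
  · obtain ⟨e, he, rfl⟩ := hσ.exists_intCast
    obtain ⟨f, hf, rfl⟩ := hτ.exists_intCast
    rw [parityForm_smul_eps_add_smul_eps, exists_intCast_eq_two_mul_iff] at hm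
    refine Or.inr (Or.inr ⟨s, t, hst, ?_, _, _, hσ, hτ, r, rfl⟩)
    by_cases hs : s ∈ I <;> by_cases ht : t ∈ I <;>
      simp only [shortParity_of_mem, shortParity_of_notMem, hs, ht, not_false_eq_true] at hm
      <;> first | tauto | omega

lemma smul_eps_mem_PsiID2 {σ : ℝ} (hσ : PM σ) (s : Fin n) (m : ℤ) :
    (σ • eps s, ((2 * m + shortParity I s : ℤ) : ℝ)) ∈ PsiID2 n I := by
  by_cases hs : s ∈ I
  · exact Or.inl ⟨s, hs, σ, hσ, m, by rw [shortParity_of_mem hs, add_zero]⟩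
  · exact Or.inr (Or.inl ⟨s, hs, σ, hσ, m, by rw [shortParity_of_notMem hs]⟩)

lemma smul_eps_add_smul_eps_mem_PsiID2 {s t : Fin n} (hst : s ≠ t)
    (hside : shortParity I s = shortParity I t) {σ τ : ℝ} (hσ : PM σ) (hτ : PM τ) (r : ℤ) :
    (σ • eps s + τ • eps t, ((2 * r : ℤ) : ℝ)) ∈ PsiID2 n I := by
  refine Or.inr (Or.inr ⟨s, t, hst, ?_, σ, τ, hσ, hτ, r, rfl⟩)
  by_cases hs : s ∈ I <;> by_cases ht : t ∈ I <;>
    simp only [shortParity_of_mem, shortParity_of_notMem, hs, ht, not_false_eq_true] at hside <;>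
    tauto

lemma PsiID2_ne_PhiD2 (hI : I ≠ Set.univ) : PsiID2 n I ≠ PhiD2 n := by
  obtain ⟨t, ht⟩ := (Set.ne_univ_iff_exists_notMem I).mp hI
  intro h
  have hx : (((1 : ℤ) : ℝ) • eps t, ((0 : ℤ) : ℝ)) ∈ PsiID2 n I :=
    h ▸ Or.inl ⟨t, _, by norm_num [PM], 0, rfl⟩
  have hm := exists_parityForm_eq_of_mem_PsiID2 hx
  rw [parityForm_smul_eps, shortParity_of_notMem ht, exists_intCast_eq_two_mul_iff] at hm
  omega

lemma reflA_mem_PsiID2 {x y : Euc n × ℝ} (hx : x ∈ PsiID2 n I) (hy : y ∈ PsiID2 n I) :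
    reflA x y ∈ PsiID2 n I := by
  have hxΦ := PsiID2_subset_PhiD2 hx
  have hyΦ := PsiID2_subset_PhiD2 hy
  obtain ⟨a, ha⟩ := exists_parityForm_eq_of_mem_PsiID2 hx
  obtain ⟨b, hb⟩ := exists_parityForm_eq_of_mem_PsiID2 hy
  obtain ⟨k, hk⟩ := exists_cartanPair_eq_of_mem_PhiD2 hxΦ hyΦ
  refine mem_PsiID2_of_parityForm_eq (reflA_mem_PhiD2 hxΦ hyΦ) ⟨b - k * a, ?_⟩
  rw [reflA_eq_sub_cartanPair_smul, hk, map_sub, map_smul, ha, hb, smul_eq_mul]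
  push_cast
  ring

lemma isClosedIn_PsiID2 : IsClosedIn (PhiD2 n) (PsiID2 n I) := by
  intro x hx y hy hxy
  obtain ⟨a, ha⟩ := exists_parityForm_eq_of_mem_PsiID2 hx
  obtain ⟨b, hb⟩ := exists_parityForm_eq_of_mem_PsiID2 hy
  exact mem_PsiID2_of_parityForm_eq hxy ⟨a + b, by rw [map_add, ha, hb]; push_cast; ring⟩

lemma isClosedSubrootSystem_PsiID2 (hI : I ≠ Set.univ) :
    IsClosedSubrootSystem (PhiD2 n) (PsiID2 n I) := by
  obtain ⟨t, -⟩ := (Set.ne_univ_iff_exists_notMem I).mp hI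
  exact ⟨⟨⟨_, smul_eps_mem_PsiID2 PM.one t 0⟩, PsiID2_subset_PhiD2, PsiID2_ne_PhiD2 hI,
    fun _ hx _ hy => reflA_mem_PsiID2 hx hy⟩, isClosedIn_PsiID2⟩

lemma mk_add_mk_intCast_eq {v w u : Euc n} {a b c : ℤ} (hv : v + w = u) (hc : a + b = c) :
    ((v, (a : ℝ)) : Euc n × ℝ) + (w, (b : ℝ)) = (u, (c : ℝ)) := by
  rw [Prod.mk_add_mk, hv, ← hc, Int.cast_add]

lemma IsClosedIn.mem_of_add_eq {Φ Δ : Set (Euc n × ℝ)} (hΔ : IsClosedIn Φ Δ)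
    {x y z : Euc n × ℝ} (hx : x ∈ Δ) (hy : y ∈ Δ) (hz : z ∈ Φ) (h : x + y = z) : z ∈ Δ :=
  h ▸ hΔ x hx y hy (h ▸ hz)

lemma exists_eq_two_mul_add_shortParity_or (I : Set (Fin n)) (s : Fin n) (r : ℤ) :
    ∃ m, r = 2 * m + shortParity I s ∨ r = 2 * m + 1 - shortParity I s := by
  have := shortParity_eq_zero_or_one I s
  exact ⟨r / 2, by omega⟩

section Maximality

variable {Δ : Set (Euc n × ℝ)}

/- The roots of `Φ` outside `Ψ_I` are the short roots `σε_s + (2a + 1 - shortParity I s)δ` and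
the long roots `σε_s + τε_t + 2bδ` with `shortParity I s ≠ shortParity I t`. For `Δ` closed and
containing `Ψ_I`, the lemmas below pass membership in `Δ` between them by adding roots of `Ψ_I`. -/

lemma long_mem_of_short_mem (hΔ : IsClosedIn (PhiD2 n) Δ)
    (hΨ : PsiID2 n I ⊆ Δ) {s t : Fin n} (hst : shortParity I s ≠ shortParity I t) {σ τ : ℝ}
    (hσ : PM σ) (hτ : PM τ) {a : ℤ}
    (hx : (σ • eps s, ((2 * a + 1 - shortParity I s : ℤ) : ℝ)) ∈ Δ) (b : ℤ) :
    (σ • eps s + τ • eps t, ((2 * b : ℤ) : ℝ)) ∈ Δ := by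
  have := shortParity_eq_zero_or_one I s
  have := shortParity_eq_zero_or_one I t
  exact hΔ.mem_of_add_eq hx (hΨ (smul_eps_mem_PsiID2 hτ t (b - a - shortParity I t)))
    (Or.inr ⟨s, t, ne_of_apply_ne _ hst, σ, τ, hσ, hτ, b, rfl⟩)
    (mk_add_mk_intCast_eq rfl (by omega))

lemma short_mem_of_long_mem (hΔ : IsClosedIn (PhiD2 n) Δ)
    (hΨ : PsiID2 n I ⊆ Δ) {s t : Fin n} (hst : shortParity I s ≠ shortParity I t) {σ τ : ℝ}
    (hσ : PM σ) (hτ : PM τ) {b : ℤ} (hx : (σ • eps s + τ • eps t, ((2 * b : ℤ) : ℝ)) ∈ Δ)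
    (m : ℤ) : (σ • eps s, ((2 * m + 1 - shortParity I s : ℤ) : ℝ)) ∈ Δ := by
  have := shortParity_eq_zero_or_one I s
  have := shortParity_eq_zero_or_one I t
  exact hΔ.mem_of_add_eq hx (hΨ (smul_eps_mem_PsiID2 hτ.neg t (m - b)))
    (Or.inl ⟨s, σ, hσ, _, rfl⟩) (mk_add_mk_intCast_eq (by module) (by omega))

lemma short_mem_of_short_mem (hΔ : IsClosedIn (PhiD2 n) Δ) (hΨ : PsiID2 n I ⊆ Δ)
    {s u : Fin n} (hsu : s ≠ u) {σ : ℝ} (hσ : PM σ) {a : ℤ}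
    (hx : (σ • eps s, ((2 * a + 1 - shortParity I s : ℤ) : ℝ)) ∈ Δ) {ρ : ℝ} (hρ : PM ρ)
    (m : ℤ) : (ρ • eps u, ((2 * m + 1 - shortParity I u : ℤ) : ℝ)) ∈ Δ := by
  by_cases hside : shortParity I s = shortParity I u
  · exact hΔ.mem_of_add_eq hx
      (hΨ (smul_eps_add_smul_eps_mem_PsiID2 hsu hside hσ.neg hρ (m - a)))
      (Or.inl ⟨u, ρ, hρ, _, rfl⟩) (mk_add_mk_intCast_eq (by module) (by omega))
  · have hlong := long_mem_of_short_mem hΔ hΨ hside hσ hρ hx 0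
    rw [add_comm] at hlong
    exact short_mem_of_long_mem hΔ hΨ (Ne.symm hside) hρ hσ hlong m

lemma short_mem_of_short_mem_of_two_le (hn : 2 ≤ n) (hΔ : IsClosedIn (PhiD2 n) Δ)
    (hΨ : PsiID2 n I ⊆ Δ) {s : Fin n} {σ : ℝ} (hσ : PM σ) {a : ℤ}
    (hx : (σ • eps s, ((2 * a + 1 - shortParity I s : ℤ) : ℝ)) ∈ Δ) (u : Fin n) {ρ : ℝ}
    (hρ : PM ρ) (m : ℤ) : (ρ • eps u, ((2 * m + 1 - shortParity I u : ℤ) : ℝ)) ∈ Δ := by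
  obtain ⟨v, hvu⟩ := @exists_ne _ (Fin.nontrivial_iff_two_le.mpr hn) u
  by_cases hsu : s = u
  · subst hsu
    exact short_mem_of_short_mem hΔ hΨ hvu PM.one
      (short_mem_of_short_mem hΔ hΨ (Ne.symm hvu) hσ hx PM.one 0) hρ m
  · exact short_mem_of_short_mem hΔ hΨ hsu hσ hx hρ m

lemma PhiD2_subset_of_mem_of_notMem (hn : 2 ≤ n) (hΔ : IsClosedIn (PhiD2 n) Δ)
    (hΨ : PsiID2 n I ⊆ Δ) {x : Euc n × ℝ} (hxΦ : x ∈ PhiD2 n) (hxΔ : x ∈ Δ)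
    (hxΨ : x ∉ PsiID2 n I) : PhiD2 n ⊆ Δ := by
  obtain ⟨s, σ, hσ, a, hshort⟩ : ∃ s σ, PM σ ∧ ∃ a : ℤ,
      (σ • eps s, ((2 * a + 1 - shortParity I s : ℤ) : ℝ)) ∈ Δ := by
    rcases hxΦ with ⟨s, σ, hσ, r, rfl⟩ | ⟨s, t, hst, σ, τ, hσ, hτ, r, rfl⟩
    · obtain ⟨m, rfl | rfl⟩ := exists_eq_two_mul_add_shortParity_or I s r
      · exact absurd (smul_eps_mem_PsiID2 hσ s m) hxΨ
      · exact ⟨s, σ, hσ, m, hxΔ⟩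
    · by_cases hside : shortParity I s = shortParity I t
      · exact absurd (smul_eps_add_smul_eps_mem_PsiID2 hst hside hσ hτ r) hxΨ
      · exact ⟨s, σ, hσ, 0, short_mem_of_long_mem hΔ hΨ hside hσ hτ hxΔ 0⟩
  rintro z (⟨u, ρ, hρ, r, rfl⟩ | ⟨u, v, huv, ρ, ρ', hρ, hρ', r, rfl⟩)
  · obtain ⟨m, rfl | rfl⟩ := exists_eq_two_mul_add_shortParity_or I u r
    · exact hΨ (smul_eps_mem_PsiID2 hρ u m)
    · exact short_mem_of_short_mem_of_two_le hn hΔ hΨ hσ hshort u hρ m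
  · by_cases hside : shortParity I u = shortParity I v
    · exact hΨ (smul_eps_add_smul_eps_mem_PsiID2 huv hside hρ hρ' r)
    · exact long_mem_of_short_mem hΔ hΨ hside hρ hρ'
        (short_mem_of_short_mem_of_two_le hn hΔ hΨ hσ hshort u hρ 0) r

end Maximality

/-- For every proper subset `I ⊊ {1,…,n}` the set `Ψ_I` is a
maximal closed subroot system of the affine root system of type `D_{n+1}^{(2)}`. -/
theorem statement12 (n : ℕ) (hn : 2 ≤ n) (I : Set (Fin n)) (hI : I ≠ Set.univ) :
    IsMaximalClosedSubrootSystem (PhiD2 n) (PsiID2 n I) := by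
  refine ⟨isClosedSubrootSystem_PsiID2 hI, fun Δ ⟨⟨_, hΔΦ, hΔ_ne, _⟩, hΔ⟩ hΨΔ => ?_⟩
  by_contra hne
  obtain ⟨x, hxΔ, hxΨ⟩ := Set.not_subset.mp fun h => hne (h.antisymm hΨΔ)
  exact hΔ_ne (hΔΦ.antisymm (PhiD2_subset_of_mem_of_notMem hn hΔ hΨΔ (hΔΦ hxΔ) hxΔ hxΨ))
end
end

section
/- A subset Ψ ⊆ Φ, the affine root system of type D_4^{(3)}, is a maximal closed subroot system of Φ such that Gr(Ψ) is not closed in Gr(Φ) if and only if Gr(Ψ) = {ε_i − ε_j : 1 ≤ i ≠ j ≤ 3} and Ψ = Ψ(i,j,k;ℓ) for some permutation (i, j, k) of (1, 2, 3) and some ℓ ∈ ℤ with ℓ ≢ 0 (mod 3). -/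
noncomputable section

variable {V : Type*} [NormedAddCommGroup V] [InnerProductSpace ℝ V]

/-- The affine root system of type `D_4^{(3)}`. -/
def PhiD43 : Set (Euc 3 × ℝ) :=
  {x | (∃ i j : Fin 3, i ≠ j ∧ ∃ r : ℤ, x = (eps i - eps j, (r : ℝ))) ∨
       (∃ i j k : Fin 3, i ≠ j ∧ j ≠ k ∧ i ≠ k ∧ ∃ σ : ℝ, PM σ ∧ ∃ r : ℤ,
          x = (σ • (eps i + eps j - (2 : ℝ) • eps k), ((3 * r : ℤ) : ℝ)))}

/-- The positive part `Ψ⁺(i,j,k;ℓ)`. -/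
def PsiPlusD43 (i j k : Fin 3) (l : ℤ) : Set (Euc 3 × ℝ) :=
  {x | (∃ r : ℤ, x = (eps i - eps j, ((3 * r : ℤ) : ℝ))) ∨
       (∃ r : ℤ, x = (eps j - eps k, ((3 * r + l : ℤ) : ℝ))) ∨
       (∃ r : ℤ, x = (eps i - eps k, ((3 * r + l : ℤ) : ℝ)))}

/-- `Ψ(i,j,k;ℓ) = Ψ⁺(i,j,k;ℓ) ∪ (−Ψ⁺(i,j,k;ℓ))`. -/
def PsiD43 (i j k : Fin 3) (l : ℤ) : Set (Euc 3 × ℝ) :=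
  PsiPlusD43 i j k l ∪ (-PsiPlusD43 i j k l)

/-!
The short affine roots of `Φ` are `(ε_a − ε_b) + cδ` with `c ∈ ℤ`, the long ones
`±(ε_i + ε_j − 2ε_k) + 3rδ`. For `g : Fin 3 → ℤ` let `Ψ_g` consist of the `v + cδ ∈ Φ` with
`c ≡ ⟪g, v⟫ (mod 3)`. The condition is additive, so `Ψ_g` is a closed subroot system; if
`3 ∤ g₀ + g₁ + g₂` it contains no long root, so its gradient `A₂` is not closed in `G₂`. It is
maximal: a closed subroot system strictly containing it meets some direction `ε_a − ε_b` in a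
second residue class mod 3, reflections in parallel affine roots of two classes produce every
shift in that direction, and then closedness produces all of `Φ`.

Conversely, if `u, v ∈ Gr Ψ` and `u + v ∈ Gr Φ \ Gr Ψ`, then `u + v` is neither `s_u v` nor
`s_v u`, which forces `u, v` to be short at angle `π/3`. Hence `Gr Ψ` contains every short root
and no long one (the long roots form one orbit, and `u + v` is long). Each direction of `Ψ`
then carries a single residue class mod 3, since two classes would yield a long root; these
classes are differences `g a − g b`, so `Ψ ⊆ Ψ_g`, and maximality gives `Ψ = Ψ_g`. Finally
`Ψ_g = Ψ(i,j,k;ℓ)` when `g i ≡ g j` and `ℓ = g j − g k`.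
-/

open scoped RealInnerProductSpace
open Equiv

theorem reflV_self {u : V} (hu : ⟪u, u⟫ ≠ 0) : reflV u u = -u := by
  rw [reflV, cartanPair, mul_div_assoc, div_self hu]
  module

theorem reflV_eq_add {u v : V} (hu : ⟪u, u⟫ ≠ 0) (h : 2 * ⟪v, u⟫ = -⟪u, u⟫) :
    reflV u v = v + u := by
  rw [reflV, cartanPair, h, neg_div, div_self hu, neg_smul, one_smul, sub_neg_eq_add]

theorem reflA_eq (u v : V) (c d : ℝ) :
    reflA (u, c) (v, d) = (reflV u v, d - cartanPair u v * c) := by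
  simp [reflA, reflV, cartanPair, smul_eq_mul]

theorem reflA_self {x : V × ℝ} (hx : ⟪x.1, x.1⟫ ≠ 0) : reflA x x = -x := by
  rw [reflA, mul_div_assoc, div_self hx]
  module

theorem neg_mem_of_reflV_mem {S : Set V} (hS : ∀ u ∈ S, ∀ v ∈ S, reflV u v ∈ S) {u : V}
    (hu : u ∈ S) (h : ⟪u, u⟫ ≠ 0) : -u ∈ S :=
  reflV_self h ▸ hS u hu u hu

theorem neg_mem_of_reflA_mem {S : Set (V × ℝ)} (hrefl : ∀ x ∈ S, ∀ y ∈ S, reflA x y ∈ S)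
    {x : V × ℝ} (hx : x ∈ S) (h : ⟪x.1, x.1⟫ ≠ 0) : -x ∈ S :=
  reflA_self h ▸ hrefl x hx x hx

theorem reflV_mem_GrC {n : ℕ} {Ψ : Set (Euc n × ℝ)} (hΨ : ∀ x ∈ Ψ, ∀ y ∈ Ψ, reflA x y ∈ Ψ)
    {u v : Euc n} (hu : u ∈ GrC Ψ) (hv : v ∈ GrC Ψ) : reflV u v ∈ GrC Ψ := by
  obtain ⟨c, hc⟩ := hu
  obtain ⟨d, hd⟩ := hv
  exact ⟨_, reflA_eq u v c d ▸ hΨ _ hc _ hd⟩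

theorem GrC_mono {n : ℕ} {Ψ Φ : Set (Euc n × ℝ)} (h : Ψ ⊆ Φ) : GrC Ψ ⊆ GrC Φ :=
  fun _ ⟨c, hc⟩ => ⟨c, h hc⟩

def levelHom (γ : V) : V × ℝ →+ ℝ where
  toFun x := x.2 - ⟪γ, x.1⟫
  map_zero' := by simp
  map_add' x y := by simp only [Prod.fst_add, Prod.snd_add, inner_add_right]; ring

def levelSubgroup (γ : V) (m : ℝ) : AddSubgroup (V × ℝ) :=
  (AddSubgroup.zmultiples m).comap (levelHom γ)

theorem mem_levelSubgroup {γ : V} {m : ℝ} {x : V × ℝ} :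
    x ∈ levelSubgroup γ m ↔ ∃ n : ℤ, x.2 - ⟪γ, x.1⟫ = n * m := by
  simp [levelSubgroup, levelHom, AddSubgroup.mem_zmultiples_iff, eq_comm]

theorem reflA_mem_levelSubgroup {γ : V} {m : ℝ} {x y : V × ℝ} (hx : x ∈ levelSubgroup γ m)
    (hy : y ∈ levelSubgroup γ m) {n : ℤ} (hn : cartanPair x.1 y.1 = n) :
    reflA x y ∈ levelSubgroup γ m := by
  change y - cartanPair x.1 y.1 • x ∈ _
  rw [hn, Int.cast_smul_eq_zsmul]
  exact sub_mem hy (zsmul_mem hx n)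

theorem sum_fin_three_eq {M : Type*} [AddCommMonoid M] (f : Fin 3 → M) {i j k : Fin 3}
    (hij : i ≠ j) (hjk : j ≠ k) (hik : i ≠ k) : ∑ x, f x = f i + f j + f k := by
  rw [Fin.sum_univ_three]
  fin_cases i <;> fin_cases j <;> fin_cases k <;> simp_all <;> abel

theorem exists_pair_ne_ne (k : Fin 3) : ∃ i j : Fin 3, i ≠ j ∧ j ≠ k ∧ i ≠ k := by
  revert k; decide

theorem exists_third : ∀ a b : Fin 3, ∃ e, a ≠ e ∧ b ≠ e := by decide

theorem pair_eq_of_ne : ∀ a b d p q : Fin 3, a ≠ b → a ≠ d → b ≠ d → p ≠ q →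
    p = a ∧ q = b ∨ p = b ∧ q = a ∨ p = a ∧ q = d ∨ p = d ∧ q = a ∨ p = b ∧ q = d ∨
      p = d ∧ q = b := by
  decide

theorem shared_index_of_inner_eq_one : ∀ a b c d : Fin 3, a ≠ b → c ≠ d →
    ((if a = c then 1 else 0) - (if a = d then 1 else 0) -
      ((if b = c then 1 else 0) - (if b = d then 1 else 0)) : ℤ) = 1 →
    a = c ∧ b ≠ d ∨ b = d ∧ a ≠ c := by
  decide

theorem three_dvd_cases {κ κ' : ℤ} (h : ¬ 3 ∣ κ - κ') (n : ℤ) :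
    3 ∣ n + κ ∨ 3 ∣ n + κ' ∨ 3 ∣ n - κ - κ' := by
  rcases (by omega : κ % 3 = 0 ∨ κ % 3 = 1 ∨ κ % 3 = 2) with h1 | h1 | h1 <;>
  rcases (by omega : κ' % 3 = 0 ∨ κ' % 3 = 1 ∨ κ' % 3 = 2) with h2 | h2 | h2 <;>
  omega

def shortRoot (a b : Fin 3) : Euc 3 := eps a - eps b

def longRoot (k : Fin 3) : Euc 3 := ∑ x, eps x - (3 : ℝ) • eps k

theorem inner_eps (p q : Fin 3) : ⟪eps p, eps q⟫ = if p = q then 1 else 0 := by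
  simp [eps, EuclideanSpace.inner_single_left]

theorem inner_eps_sum (p : Fin 3) : ⟪eps p, ∑ x, eps x⟫ = 1 := by
  simp [inner_sum, inner_eps]

theorem longRoot_eq {i j k : Fin 3} (hij : i ≠ j) (hjk : j ≠ k) (hik : i ≠ k) :
    eps i + eps j - (2 : ℝ) • eps k = longRoot k := by
  rw [longRoot, sum_fin_three_eq eps hij hjk hik]
  module

theorem neg_shortRoot (a b : Fin 3) : -shortRoot a b = shortRoot b a := by
  simp only [shortRoot, neg_sub]

theorem shortRoot_add_shortRoot (a b c : Fin 3) :
    shortRoot a b + shortRoot b c = shortRoot a c := by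
  simp only [shortRoot, sub_add_sub_cancel]

theorem shortRoot_add_shortRoot_of_eq_target {a b k : Fin 3} (hab : a ≠ b) (hbk : b ≠ k)
    (hak : a ≠ k) : shortRoot a k + shortRoot b k = longRoot k := by
  rw [← longRoot_eq hab hbk hak, shortRoot, shortRoot]
  module

theorem shortRoot_add_shortRoot_of_eq_source {a b k : Fin 3} (hab : a ≠ b) (hbk : b ≠ k)
    (hak : a ≠ k) : shortRoot k a + shortRoot k b = -longRoot k := by
  rw [← shortRoot_add_shortRoot_of_eq_target hab hbk hak, neg_add, neg_shortRoot, neg_shortRoot]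

theorem longRoot_add_shortRoot {x y z : Fin 3} (hxy : x ≠ y) (hyz : y ≠ z) (hxz : x ≠ z) :
    longRoot z + shortRoot z x = shortRoot y z := by
  rw [← longRoot_eq hxy hyz hxz, shortRoot, shortRoot]
  module

theorem inner_eps_shortRoot (p a b : Fin 3) :
    ⟪eps p, shortRoot a b⟫ = (((if p = a then 1 else 0) - (if p = b then 1 else 0) : ℤ) : ℝ) := by
  simp only [shortRoot, inner_sub_right, inner_eps]
  push_cast
  rfl

theorem inner_shortRoot_self {a b : Fin 3} (hab : a ≠ b) : ⟪shortRoot a b, shortRoot a b⟫ = 2 := by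
  simp only [shortRoot, inner_sub_left, inner_sub_right, inner_eps, hab, hab.symm]
  norm_num

theorem inner_sum_shortRoot (a b : Fin 3) : ⟪∑ x, eps x, shortRoot a b⟫ = 0 := by
  rw [shortRoot, inner_sub_right, real_inner_comm, inner_eps_sum, real_inner_comm, inner_eps_sum,
    sub_self]

theorem inner_longRoot_shortRoot (k a b : Fin 3) :
    ⟪longRoot k, shortRoot a b⟫ = -3 * ⟪eps k, shortRoot a b⟫ := by
  rw [longRoot, inner_sub_left, inner_sum_shortRoot, real_inner_smul_left]
  ring

theorem inner_longRoot_eps (k p : Fin 3) :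
    ⟪longRoot k, eps p⟫ = 1 - 3 * (if k = p then 1 else 0) := by
  rw [longRoot, inner_sub_left, real_inner_comm, inner_eps_sum, real_inner_smul_left, inner_eps]

theorem inner_longRoot_sum (k : Fin 3) : ⟪longRoot k, ∑ x, eps x⟫ = 0 := by
  simp only [longRoot, inner_sub_left, real_inner_smul_left, inner_eps_sum, sum_inner]
  norm_num

theorem inner_longRoot_self (k : Fin 3) : ⟪longRoot k, longRoot k⟫ = 6 := by
  rw [longRoot, inner_sub_right, ← longRoot, inner_longRoot_sum, real_inner_smul_right,
    inner_longRoot_eps]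
  norm_num

theorem eps_swap {a b : Fin 3} (hab : a ≠ b) (p : Fin 3) :
    eps (swap a b p) = eps p - ⟪eps p, shortRoot a b⟫ • shortRoot a b := by
  rw [inner_eps_shortRoot, swap_apply_def, shortRoot]
  split_ifs with hpa hpb <;> subst_vars <;> simp_all

theorem cartanPair_shortRoot {a b : Fin 3} (hab : a ≠ b) (v : Euc 3) :
    cartanPair (shortRoot a b) v = ⟪v, shortRoot a b⟫ := by
  rw [cartanPair, inner_shortRoot_self hab]
  ring

theorem reflV_shortRoot_shortRoot {a b : Fin 3} (hab : a ≠ b) (p q : Fin 3) :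
    reflV (shortRoot a b) (shortRoot p q) = shortRoot (swap a b p) (swap a b q) := by
  rw [reflV, cartanPair_shortRoot hab,
    show shortRoot (swap a b p) (swap a b q) = eps (swap a b p) - eps (swap a b q) from rfl,
    eps_swap hab, eps_swap hab, show shortRoot p q = eps p - eps q from rfl, inner_sub_left]
  module

theorem reflV_shortRoot_longRoot {k a : Fin 3} (hka : k ≠ a) (σ : ℝ) :
    reflV (shortRoot k a) (σ • longRoot k) = σ • longRoot a := by
  rw [reflV, cartanPair_shortRoot hka, real_inner_smul_left, inner_longRoot_shortRoot,
    inner_eps_shortRoot, if_pos rfl, if_neg hka]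
  simp only [longRoot, shortRoot]
  push_cast
  module

theorem shortRoot_mem_PhiD43 {a b : Fin 3} (hab : a ≠ b) (c : ℤ) :
    (shortRoot a b, (c : ℝ)) ∈ PhiD43 :=
  Or.inl ⟨a, b, hab, c, rfl⟩

theorem longRoot_mem_PhiD43 {σ : ℝ} (hσ : PM σ) (k : Fin 3) (r : ℤ) :
    (σ • longRoot k, ((3 * r : ℤ) : ℝ)) ∈ PhiD43 := by
  obtain ⟨i, j, hij, hjk, hik⟩ := exists_pair_ne_ne k
  exact Or.inr ⟨i, j, k, hij, hjk, hik, σ, hσ, r, by rw [longRoot_eq hij hjk hik]⟩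

theorem PhiD43_cases {x : Euc 3 × ℝ} (hx : x ∈ PhiD43) :
    (∃ a b, a ≠ b ∧ ∃ c : ℤ, x = (shortRoot a b, (c : ℝ))) ∨
      ∃ σ, PM σ ∧ ∃ k, ∃ r : ℤ, x = (σ • longRoot k, ((3 * r : ℤ) : ℝ)) := by
  rcases hx with ⟨i, j, hij, r, rfl⟩ | ⟨i, j, k, hij, hjk, hik, σ, hσ, r, rfl⟩
  · exact Or.inl ⟨i, j, hij, r, rfl⟩
  · exact Or.inr ⟨σ, hσ, k, r, by rw [longRoot_eq hij hjk hik]⟩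

theorem PM.neg_s15 {σ : ℝ} (hσ : PM σ) : PM (-σ) := by
  rcases hσ with rfl | rfl
  exacts [Or.inr rfl, Or.inl (neg_neg 1)]

theorem neg_mem_PhiD43 {x : Euc 3 × ℝ} (hx : x ∈ PhiD43) : -x ∈ PhiD43 := by
  rcases PhiD43_cases hx with ⟨a, b, hab, c, rfl⟩ | ⟨σ, hσ, k, r, rfl⟩
  · simpa [neg_shortRoot] using shortRoot_mem_PhiD43 hab.symm (-c)
  · simpa [neg_smul] using longRoot_mem_PhiD43 hσ.neg_s15 k (-r)

theorem exists_int_of_mem_PhiD43 {x : Euc 3 × ℝ} (hx : x ∈ PhiD43) : ∃ n : ℤ, x.2 = n := by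
  rcases PhiD43_cases hx with ⟨_, _, _, c, rfl⟩ | ⟨_, _, _, r, rfl⟩
  exacts [⟨c, rfl⟩, ⟨3 * r, rfl⟩]

theorem GrC_PhiD43_cases {v : Euc 3} (hv : v ∈ GrC PhiD43) :
    (∃ a b, a ≠ b ∧ v = shortRoot a b) ∨ ∃ σ, PM σ ∧ ∃ k, v = σ • longRoot k := by
  obtain ⟨c, hc⟩ := hv
  rcases PhiD43_cases hc with ⟨a, b, hab, _, h⟩ | ⟨σ, hσ, k, _, h⟩
  exacts [Or.inl ⟨a, b, hab, congrArg Prod.fst h⟩, Or.inr ⟨σ, hσ, k, congrArg Prod.fst h⟩]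

theorem inner_smul_longRoot_self {σ : ℝ} (hσ : PM σ) (k : Fin 3) :
    ⟪σ • longRoot k, σ • longRoot k⟫ = 6 := by
  rw [real_inner_smul_left, real_inner_smul_right, inner_longRoot_self]
  rcases hσ with rfl | rfl <;> norm_num

theorem inner_self_of_mem_GrC {v : Euc 3} (hv : v ∈ GrC PhiD43) : ⟪v, v⟫ = 2 ∨ ⟪v, v⟫ = 6 := by
  rcases GrC_PhiD43_cases hv with ⟨a, b, hab, rfl⟩ | ⟨σ, hσ, k, rfl⟩
  exacts [Or.inl (inner_shortRoot_self hab), Or.inr (inner_smul_longRoot_self hσ k)]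

theorem inner_self_ne_zero_of_mem_GrC {v : Euc 3} (hv : v ∈ GrC PhiD43) : ⟪v, v⟫ ≠ 0 := by
  rcases inner_self_of_mem_GrC hv with h | h <;> rw [h] <;> norm_num

theorem exists_shortRoot_of_inner_self {v : Euc 3} (hv : v ∈ GrC PhiD43) (h : ⟪v, v⟫ = 2) :
    ∃ a b, a ≠ b ∧ v = shortRoot a b := by
  refine (GrC_PhiD43_cases hv).resolve_right ?_
  rintro ⟨σ, hσ, k, rfl⟩
  rw [inner_smul_longRoot_self hσ] at h
  norm_num at h

theorem exists_longRoot_of_inner_self {v : Euc 3} (hv : v ∈ GrC PhiD43) (h : ⟪v, v⟫ ≠ 2) :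
    ∃ σ, PM σ ∧ ∃ k, v = σ • longRoot k := by
  refine (GrC_PhiD43_cases hv).resolve_left ?_
  rintro ⟨a, b, hab, rfl⟩
  exact h (inner_shortRoot_self hab)

theorem inner_sum_of_mem_GrC {v : Euc 3} (hv : v ∈ GrC PhiD43) : ⟪v, ∑ x, eps x⟫ = 0 := by
  rcases GrC_PhiD43_cases hv with ⟨a, b, -, rfl⟩ | ⟨σ, -, k, rfl⟩
  · rw [real_inner_comm, inner_sum_shortRoot]
  · rw [real_inner_smul_left, inner_longRoot_sum, mul_zero]

theorem exists_int_inner_eps_of_mem_GrC {v : Euc 3} (hv : v ∈ GrC PhiD43) (p : Fin 3) :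
    ∃ n : ℤ, ⟪v, eps p⟫ = n := by
  rcases GrC_PhiD43_cases hv with ⟨a, b, -, rfl⟩ | ⟨σ, hσ, k, rfl⟩
  · exact ⟨_, by rw [real_inner_comm, inner_eps_shortRoot]⟩
  · rw [real_inner_smul_left, inner_longRoot_eps]
    rcases hσ with rfl | rfl
    exacts [⟨1 - 3 * if k = p then 1 else 0, by push_cast; ring⟩,
      ⟨-(1 - 3 * if k = p then 1 else 0), by push_cast; ring⟩]

theorem exists_int_inner_of_mem_GrC {u v : Euc 3} (hu : u ∈ GrC PhiD43) (hv : v ∈ GrC PhiD43) :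
    ∃ n : ℤ, ⟪u, v⟫ = n ∧ (⟪v, v⟫ = 6 → 3 ∣ n) := by
  rcases GrC_PhiD43_cases hv with ⟨a, b, hab, rfl⟩ | ⟨σ, hσ, k, rfl⟩
  · obtain ⟨na, hna⟩ := exists_int_inner_eps_of_mem_GrC hu a
    obtain ⟨nb, hnb⟩ := exists_int_inner_eps_of_mem_GrC hu b
    refine ⟨na - nb, by rw [shortRoot, inner_sub_right, hna, hnb, Int.cast_sub], fun h => ?_⟩
    rw [inner_shortRoot_self hab] at h
    norm_num at h
  · obtain ⟨nk, hnk⟩ := exists_int_inner_eps_of_mem_GrC hu k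
    have h : ⟪u, σ • longRoot k⟫ = σ * (-3 * nk) := by
      rw [real_inner_smul_right, longRoot, inner_sub_right, inner_sum_of_mem_GrC hu,
        real_inner_smul_right, hnk]
      ring
    rw [h]
    rcases hσ with rfl | rfl
    exacts [⟨-3 * nk, by push_cast; ring, fun _ => ⟨-nk, by ring⟩⟩,
      ⟨3 * nk, by push_cast; ring, fun _ => ⟨nk, rfl⟩⟩]

/-- In the gradient root system (of type `G₂`), a sum of two roots that is a root is obtained
by reflecting one of them in the other, unless both are short and at an angle of `π/3`. -/
theorem inner_eq_one_of_add_mem_GrC {u v : Euc 3} (hu : u ∈ GrC PhiD43) (hv : v ∈ GrC PhiD43)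
    (huv : u + v ∈ GrC PhiD43) (hvu : reflV u v ≠ u + v) (huv' : reflV v u ≠ u + v) :
    ⟪u, u⟫ = 2 ∧ ⟪v, v⟫ = 2 ∧ ⟪u, v⟫ = 1 := by
  obtain ⟨n, hn, hn3v⟩ := exists_int_inner_of_mem_GrC hu hv
  obtain ⟨m, hm, hm3u⟩ := exists_int_inner_of_mem_GrC hv hu
  rw [real_inner_comm, hn, Int.cast_inj] at hm
  subst hm
  have hsum := real_inner_add_add_self u v
  have hu0 : 2 * n ≠ -⟪u, u⟫ := fun h => hvu <| by
    rw [reflV_eq_add (inner_self_ne_zero_of_mem_GrC hu) (by rw [real_inner_comm, hn, h]), add_comm]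
  have hv0 : 2 * n ≠ -⟪v, v⟫ := fun h =>
    huv' (reflV_eq_add (inner_self_ne_zero_of_mem_GrC hv) (by rw [hn, h]))
  rw [hn] at hsum ⊢
  rcases inner_self_of_mem_GrC hu with hp | hp <;> rcases inner_self_of_mem_GrC hv with hq | hq <;>
    rcases inner_self_of_mem_GrC huv with hs | hs <;>
    simp only [hp, hq, hs] at hsum hu0 hv0 hn3v hm3u ⊢ <;> norm_num at hn3v hm3u ⊢ <;>
    norm_cast at hsum hu0 hv0 ⊢ <;> omega

section ReflectionClosed

variable {S : Set (Euc 3)} (hS : ∀ u ∈ S, ∀ v ∈ S, reflV u v ∈ S)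
include hS

theorem shortRoot_swap_mem {a b : Fin 3} (hab : a ≠ b) (h : shortRoot a b ∈ S) :
    shortRoot b a ∈ S :=
  neg_shortRoot a b ▸ neg_mem_of_reflV_mem hS h (by rw [inner_shortRoot_self hab]; norm_num)

theorem shortRoot_mem_of_source {a b d : Fin 3} (hab : a ≠ b) (had : a ≠ d) (hbd : b ≠ d)
    (hb : shortRoot a b ∈ S) (hd : shortRoot a d ∈ S) {p q : Fin 3} (hpq : p ≠ q) :
    shortRoot p q ∈ S := by
  have hbd_mem : shortRoot b d ∈ S := by
    simpa [reflV_shortRoot_shortRoot hab, swap_apply_of_ne_of_ne had.symm hbd.symm] using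
      hS _ hb _ hd
  rcases pair_eq_of_ne a b d p q hab had hbd hpq with
    ⟨rfl, rfl⟩ | ⟨rfl, rfl⟩ | ⟨rfl, rfl⟩ | ⟨rfl, rfl⟩ | ⟨rfl, rfl⟩ | ⟨rfl, rfl⟩
  exacts [hb, shortRoot_swap_mem hS hab hb, hd, shortRoot_swap_mem hS had hd, hbd_mem,
    shortRoot_swap_mem hS hbd hbd_mem]

theorem shortRoot_mem_of_inner_eq_one {a b c d : Fin 3} (hab : a ≠ b) (hcd : c ≠ d)
    (h₁ : shortRoot a b ∈ S) (h₂ : shortRoot c d ∈ S)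
    (h : ⟪shortRoot a b, shortRoot c d⟫ = 1) {p q : Fin 3} (hpq : p ≠ q) :
    shortRoot p q ∈ S := by
  rw [show shortRoot a b = eps a - eps b from rfl, inner_sub_left, inner_eps_shortRoot,
    inner_eps_shortRoot, ← Int.cast_sub, Int.cast_eq_one] at h
  rcases shared_index_of_inner_eq_one a b c d hab hcd h with ⟨rfl, hbd⟩ | ⟨rfl, hac⟩
  · exact shortRoot_mem_of_source hS hab hcd hbd h₁ h₂ hpq
  · exact shortRoot_mem_of_source hS hab.symm hcd.symm hac
      (shortRoot_swap_mem hS hab h₁) (shortRoot_swap_mem hS hcd h₂) hpq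

theorem smul_longRoot_mem (hshort : ∀ p q, p ≠ q → shortRoot p q ∈ S) {σ : ℝ} (hσ : PM σ)
    {k : Fin 3} (h : σ • longRoot k ∈ S) {τ : ℝ} (hτ : PM τ) (m : Fin 3) :
    τ • longRoot m ∈ S := by
  have hm : σ • longRoot m ∈ S := by
    rcases eq_or_ne k m with rfl | hkm
    · exact h
    · simpa [reflV_shortRoot_longRoot hkm] using hS _ (hshort k m hkm) _ h
  obtain rfl | rfl : τ = σ ∨ τ = -σ := by
    rcases hσ with rfl | rfl <;> rcases hτ with rfl | rfl <;> norm_num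
  · exact hm
  · rw [neg_smul]
    exact neg_mem_of_reflV_mem hS hm (by rw [inner_smul_longRoot_self hσ]; norm_num)

end ReflectionClosed

theorem GrC_eq_of_not_closed {Ψ : Set (Euc 3 × ℝ)} (hΨΦ : Ψ ⊆ PhiD43)
    (hrefl : ∀ x ∈ Ψ, ∀ y ∈ Ψ, reflA x y ∈ Ψ)
    (hng : ¬ ∀ u ∈ GrC Ψ, ∀ v ∈ GrC Ψ, u + v ∈ GrC PhiD43 → u + v ∈ GrC Ψ) :
    GrC Ψ = {v | ∃ i j : Fin 3, i ≠ j ∧ v = eps i - eps j} := by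
  push Not at hng
  obtain ⟨u, hu, v, hv, huvΦ, huvΨ⟩ := hng
  have hS : ∀ u ∈ GrC Ψ, ∀ v ∈ GrC Ψ, reflV u v ∈ GrC Ψ := fun u hu v hv =>
    reflV_mem_GrC hrefl hu hv
  obtain ⟨hu2, hv2, huv1⟩ := inner_eq_one_of_add_mem_GrC (GrC_mono hΨΦ hu) (GrC_mono hΨΦ hv)
    huvΦ (fun h => huvΨ (h ▸ hS u hu v hv)) (fun h => huvΨ (h ▸ hS v hv u hu))
  obtain ⟨a, b, hab, rfl⟩ := exists_shortRoot_of_inner_self (GrC_mono hΨΦ hu) hu2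
  obtain ⟨c, d, hcd, rfl⟩ := exists_shortRoot_of_inner_self (GrC_mono hΨΦ hv) hv2
  have hshort : ∀ p q, p ≠ q → shortRoot p q ∈ GrC Ψ := fun p q hpq =>
    shortRoot_mem_of_inner_eq_one hS hab hcd hu hv huv1 hpq
  obtain ⟨σ, hσ, k, hk⟩ := exists_longRoot_of_inner_self huvΦ
    (by rw [real_inner_add_add_self, hu2, hv2, huv1]; norm_num)
  ext w
  constructor
  · intro hw
    rcases GrC_PhiD43_cases (GrC_mono hΨΦ hw) with ⟨p, q, hpq, rfl⟩ | ⟨τ, hτ, m, rfl⟩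
    · exact ⟨p, q, hpq, rfl⟩
    · exact absurd (hk ▸ smul_longRoot_mem hS hshort hτ hw hσ k) huvΨ
  · rintro ⟨p, q, hpq, rfl⟩
    exact hshort p q hpq

def weight (g : Fin 3 → ℤ) : Euc 3 := ∑ i, (g i : ℝ) • eps i

theorem inner_weight_eps (g : Fin 3 → ℤ) (p : Fin 3) : ⟪weight g, eps p⟫ = g p := by
  simp [weight, sum_inner, real_inner_smul_left, inner_eps]

theorem inner_weight_shortRoot (g : Fin 3 → ℤ) (a b : Fin 3) :
    ⟪weight g, shortRoot a b⟫ = ((g a - g b : ℤ) : ℝ) := by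
  rw [shortRoot, inner_sub_right, inner_weight_eps, inner_weight_eps, Int.cast_sub]

theorem inner_weight_longRoot (g : Fin 3 → ℤ) (k : Fin 3) :
    ⟪weight g, longRoot k⟫ = ((∑ i, g i - 3 * g k : ℤ) : ℝ) := by
  simp [longRoot, inner_sub_right, inner_sum, real_inner_smul_right, inner_weight_eps]

/-- `Ψ_g`: the affine roots `v + cδ` with `c ≡ ⟪g, v⟫ (mod 3)`. -/
def PsiG (g : Fin 3 → ℤ) : Set (Euc 3 × ℝ) := PhiD43 ∩ levelSubgroup (weight g) 3

section PsiG

variable {g : Fin 3 → ℤ}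

theorem shortRoot_mem_PsiG_iff {a b : Fin 3} (hab : a ≠ b) (c : ℤ) :
    (shortRoot a b, (c : ℝ)) ∈ PsiG g ↔ 3 ∣ c - (g a - g b) := by
  simp only [PsiG, Set.mem_inter_iff, shortRoot_mem_PhiD43 hab, true_and, SetLike.mem_coe,
    mem_levelSubgroup, inner_weight_shortRoot]
  constructor
  · rintro ⟨n, hn⟩
    exact ⟨n, by rw [mul_comm]; exact_mod_cast hn⟩
  · rintro ⟨n, hn⟩
    exact ⟨n, by rw [mul_comm]; exact_mod_cast hn⟩

theorem longRoot_not_mem_levelSubgroup (hg : ¬ 3 ∣ ∑ i, g i) {σ : ℝ} (hσ : PM σ) (k : Fin 3)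
    (r : ℤ) : (σ • longRoot k, ((3 * r : ℤ) : ℝ)) ∉ levelSubgroup (weight g) 3 := by
  rw [mem_levelSubgroup]
  rintro ⟨n, hn⟩
  obtain ⟨t, ht⟩ : ∃ t, ∑ i, g i - 3 * g k = t := ⟨_, rfl⟩
  rw [real_inner_smul_right, inner_weight_longRoot, ht] at hn
  rcases hσ with rfl | rfl <;> simp only [one_mul, neg_one_mul, sub_neg_eq_add] at hn <;>
    norm_cast at hn <;> omega

theorem PsiG_cases (hg : ¬ 3 ∣ ∑ i, g i) {x : Euc 3 × ℝ} (hx : x ∈ PsiG g) :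
    ∃ a b, a ≠ b ∧ ∃ c : ℤ, x = (shortRoot a b, (c : ℝ)) ∧ 3 ∣ c - (g a - g b) := by
  rcases PhiD43_cases hx.1 with ⟨a, b, hab, c, rfl⟩ | ⟨σ, hσ, k, r, rfl⟩
  · exact ⟨a, b, hab, c, rfl, (shortRoot_mem_PsiG_iff hab c).1 hx⟩
  · exact absurd hx.2 (longRoot_not_mem_levelSubgroup hg hσ k r)

theorem neg_mem_PsiG {x : Euc 3 × ℝ} (hx : x ∈ PsiG g) : -x ∈ PsiG g :=
  ⟨neg_mem_PhiD43 hx.1, neg_mem hx.2⟩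

theorem isClosedIn_PsiG : IsClosedIn PhiD43 (PsiG g) :=
  fun _ hx _ hy hxy => ⟨hxy, add_mem hx.2 hy.2⟩

theorem reflA_mem_PsiG (hg : ¬ 3 ∣ ∑ i, g i) {x y : Euc 3 × ℝ} (hx : x ∈ PsiG g)
    (hy : y ∈ PsiG g) : reflA x y ∈ PsiG g := by
  obtain ⟨a, b, hab, c, rfl, -⟩ := PsiG_cases hg hx
  obtain ⟨p, q, hpq, d, rfl, -⟩ := PsiG_cases hg hy
  obtain ⟨n, hn⟩ : ∃ n : ℤ, cartanPair (shortRoot a b) (shortRoot p q) = n := by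
    rw [cartanPair_shortRoot hab, show shortRoot p q = eps p - eps q from rfl, inner_sub_left,
      inner_eps_shortRoot, inner_eps_shortRoot]
    exact ⟨_, (Int.cast_sub _ _).symm⟩
  refine ⟨?_, reflA_mem_levelSubgroup hx.2 hy.2 hn⟩
  rw [reflA_eq, hn, reflV_shortRoot_shortRoot hab]
  simpa using shortRoot_mem_PhiD43 ((swap a b).injective.ne hpq) (d - n * c)

theorem PsiG_ne_PhiD43 (hg : ¬ 3 ∣ ∑ i, g i) : PsiG g ≠ PhiD43 := fun h =>
  longRoot_not_mem_levelSubgroup hg (Or.inl rfl) 0 0 (h ▸ longRoot_mem_PhiD43 (Or.inl rfl) 0 0).2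

theorem isClosedSubrootSystem_PsiG (hg : ¬ 3 ∣ ∑ i, g i) :
    IsClosedSubrootSystem PhiD43 (PsiG g) := by
  refine ⟨⟨⟨_, (shortRoot_mem_PsiG_iff (by decide : (0 : Fin 3) ≠ 1) (g 0 - g 1)).2 (by simp)⟩,
    Set.inter_subset_left, PsiG_ne_PhiD43 hg, fun x hx y hy => reflA_mem_PsiG hg hx hy⟩,
    isClosedIn_PsiG⟩

end PsiG

section Generation

variable {Δ : Set (Euc 3 × ℝ)}

theorem reflA_shortRoot_shortRoot_self {a b : Fin 3} (hab : a ≠ b) (u w : ℤ) :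
    reflA (shortRoot a b, (u : ℝ)) (shortRoot a b, (w : ℝ)) =
      (shortRoot b a, ((w - 2 * u : ℤ) : ℝ)) := by
  rw [reflA_eq, cartanPair_shortRoot hab, inner_shortRoot_self hab,
    reflV_self (by rw [inner_shortRoot_self hab]; norm_num), neg_shortRoot]
  push_cast
  rfl

theorem shortRoot_reflA_mem (hrefl : ∀ x ∈ Δ, ∀ y ∈ Δ, reflA x y ∈ Δ) {a b : Fin 3} (hab : a ≠ b)
    {u w : ℤ} (hu : (shortRoot a b, (u : ℝ)) ∈ Δ) (hw : (shortRoot a b, (w : ℝ)) ∈ Δ) :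
    (shortRoot b a, ((w - 2 * u : ℤ) : ℝ)) ∈ Δ :=
  reflA_shortRoot_shortRoot_self hab u w ▸ hrefl _ hu _ hw

theorem shortRoot_swap_mem_of_reflA_mem (hrefl : ∀ x ∈ Δ, ∀ y ∈ Δ, reflA x y ∈ Δ) {a b : Fin 3}
    (hab : a ≠ b) {n : ℤ} (h : (shortRoot a b, (n : ℝ)) ∈ Δ) :
    (shortRoot b a, ((-n : ℤ) : ℝ)) ∈ Δ := by
  simpa [neg_shortRoot] using
    neg_mem_of_reflA_mem hrefl h (by simp only [inner_shortRoot_self hab]; norm_num)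

theorem shortRoot_mem_of_two_classes (hrefl : ∀ x ∈ Δ, ∀ y ∈ Δ, reflA x y ∈ Δ) {a b : Fin 3}
    (hab : a ≠ b) {κ κ' : ℤ} (hκ : ¬ 3 ∣ κ - κ')
    (h : ∀ c : ℤ, 3 ∣ c - κ → (shortRoot a b, (c : ℝ)) ∈ Δ)
    (h' : ∀ c : ℤ, 3 ∣ c - κ' → (shortRoot a b, (c : ℝ)) ∈ Δ) (n : ℤ) :
    (shortRoot b a, (n : ℝ)) ∈ Δ := by
  have key : ∀ u w : ℤ, (shortRoot a b, (u : ℝ)) ∈ Δ → (shortRoot a b, (w : ℝ)) ∈ Δ →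
      w - 2 * u = n → (shortRoot b a, (n : ℝ)) ∈ Δ := by
    rintro u w hu hw rfl
    exact shortRoot_reflA_mem hrefl hab hu hw
  rcases three_dvd_cases hκ n with h₁ | h₁ | h₁
  · exact key κ _ (h κ (by simp)) (h (n + 2 * κ) (by omega)) (by ring)
  · exact key κ' _ (h' κ' (by simp)) (h' (n + 2 * κ') (by omega)) (by ring)
  · exact key κ _ (h κ (by simp)) (h' (n + 2 * κ) (by omega)) (by ring)

theorem shortRoot_mem_of_not_mem_class (hrefl : ∀ x ∈ Δ, ∀ y ∈ Δ, reflA x y ∈ Δ)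
    {g : Fin 3 → ℤ} (hsub : PsiG g ⊆ Δ) {a b : Fin 3} (hab : a ≠ b) {c : ℤ}
    (hc : (shortRoot a b, (c : ℝ)) ∈ Δ) (hwrong : ¬ 3 ∣ c - (g a - g b)) (n : ℤ) :
    (shortRoot a b, (n : ℝ)) ∈ Δ := by
  have hPsi : ∀ d : ℤ, 3 ∣ d - (g a - g b) → (shortRoot a b, (d : ℝ)) ∈ Δ := fun d hd =>
    hsub ((shortRoot_mem_PsiG_iff hab d).2 hd)
  refine shortRoot_mem_of_two_classes hrefl hab.symm (κ := -(g a - g b))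
    (κ' := g a - g b - 2 * c) (by omega) (fun d hd => ?_) (fun d hd => ?_) n
  · have h := shortRoot_reflA_mem hrefl hab (hPsi (g a - g b) (by simp))
      (hPsi (d + 2 * (g a - g b)) (by omega))
    rwa [add_sub_cancel_right] at h
  · have h := shortRoot_reflA_mem hrefl hab hc (hPsi (d + 2 * c) (by omega))
    rwa [add_sub_cancel_right] at h

theorem shortRoot_mem_of_forall_shortRoot_mem (hrefl : ∀ x ∈ Δ, ∀ y ∈ Δ, reflA x y ∈ Δ)
    (hclosed : IsClosedIn PhiD43 Δ) {a b : Fin 3} (hab : a ≠ b)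
    (hdir : ∀ p q : Fin 3, p ≠ q → ∃ c : ℤ, (shortRoot p q, (c : ℝ)) ∈ Δ)
    (hfull : ∀ n : ℤ, (shortRoot a b, (n : ℝ)) ∈ Δ) {p q : Fin 3} (hpq : p ≠ q) (n : ℤ) :
    (shortRoot p q, (n : ℝ)) ∈ Δ := by
  have swap_full : ∀ {p q}, p ≠ q → (∀ n : ℤ, (shortRoot p q, (n : ℝ)) ∈ Δ) →
      ∀ n : ℤ, (shortRoot q p, (n : ℝ)) ∈ Δ := fun hpq h n => by
    simpa using shortRoot_swap_mem_of_reflA_mem hrefl hpq (h (-n))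
  have add_mem : ∀ {p q r : Fin 3} {c d : ℤ}, p ≠ r → (shortRoot p q, (c : ℝ)) ∈ Δ →
      (shortRoot q r, (d : ℝ)) ∈ Δ → (shortRoot p r, ((c + d : ℤ) : ℝ)) ∈ Δ :=
    fun hpr hc hd => by
      simpa [shortRoot_add_shortRoot] using hclosed _ hc _ hd
        (by simpa [shortRoot_add_shortRoot] using shortRoot_mem_PhiD43 hpr (_ + _))
  obtain ⟨e, hae, hbe⟩ := exists_third a b
  obtain ⟨c, hc⟩ := hdir b e hbe
  obtain ⟨c', hc'⟩ := hdir e a hae.symm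
  have hae_full : ∀ n : ℤ, (shortRoot a e, (n : ℝ)) ∈ Δ := fun n => by
    simpa using add_mem hae (hfull (n - c)) hc
  have heb_full : ∀ n : ℤ, (shortRoot e b, (n : ℝ)) ∈ Δ := fun n => by
    simpa using add_mem hbe.symm hc' (hfull (n - c'))
  rcases pair_eq_of_ne a b e p q hab hae hbe hpq with
    ⟨rfl, rfl⟩ | ⟨rfl, rfl⟩ | ⟨rfl, rfl⟩ | ⟨rfl, rfl⟩ | ⟨rfl, rfl⟩ | ⟨rfl, rfl⟩
  exacts [hfull n, swap_full hab hfull n, hae_full n, swap_full hae hae_full n,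
    swap_full hbe.symm heb_full n, heb_full n]

theorem PhiD43_subset_of_forall_shortRoot_mem (hclosed : IsClosedIn PhiD43 Δ)
    (hall : ∀ p q : Fin 3, p ≠ q → ∀ n : ℤ, (shortRoot p q, (n : ℝ)) ∈ Δ) : PhiD43 ⊆ Δ := by
  intro x hx
  rcases PhiD43_cases hx with ⟨a, b, hab, c, rfl⟩ | ⟨σ, hσ, k, r, rfl⟩
  · exact hall a b hab c
  obtain ⟨i, j, hij, hjk, hik⟩ := exists_pair_ne_ne k
  rcases hσ with rfl | rfl
  · have h := hclosed _ (hall i k hik 0) _ (hall j k hjk (3 * r))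
    rw [Prod.mk_add_mk, shortRoot_add_shortRoot_of_eq_target hij hjk hik] at h
    simpa using h (by simpa using longRoot_mem_PhiD43 (Or.inl rfl) k r)
  · have h := hclosed _ (hall k i hik.symm 0) _ (hall k j hjk.symm (3 * r))
    rw [Prod.mk_add_mk, shortRoot_add_shortRoot_of_eq_source hij hjk hik] at h
    simpa using h (by simpa using longRoot_mem_PhiD43 (Or.inr rfl) k r)

theorem exists_not_mem_class_of_longRoot_mem (hrefl : ∀ x ∈ Δ, ∀ y ∈ Δ, reflA x y ∈ Δ)
    (hclosed : IsClosedIn PhiD43 Δ) {g : Fin 3 → ℤ} (hg : ¬ 3 ∣ ∑ i, g i)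
    (hsub : PsiG g ⊆ Δ) {σ : ℝ} (hσ : PM σ) {z : Fin 3} {s : ℤ}
    (hz : (σ • longRoot z, ((3 * s : ℤ) : ℝ)) ∈ Δ) :
    ∃ a b, a ≠ b ∧ ∃ c : ℤ, (shortRoot a b, (c : ℝ)) ∈ Δ ∧ ¬ 3 ∣ c - (g a - g b) := by
  -- `longRoot z + (ε_z − ε_x) = ε_y − ε_z`, and the constant term of this sum differs from
  -- `g y − g z` by `−∑ g (mod 3)`.
  obtain ⟨t, ht⟩ : ∃ t : ℤ, (longRoot z, ((3 * t : ℤ) : ℝ)) ∈ Δ := by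
    rcases hσ with rfl | rfl
    · exact ⟨s, by simpa using hz⟩
    · refine ⟨-s, ?_⟩
      simpa using neg_mem_of_reflA_mem hrefl hz
        (by simp only [inner_smul_longRoot_self (Or.inr rfl)]; norm_num)
  obtain ⟨x, y, hxy, hyz, hxz⟩ := exists_pair_ne_ne z
  have h := hclosed _ ht _ (hsub ((shortRoot_mem_PsiG_iff hxz.symm (g z - g x)).2 (by simp)))
  rw [Prod.mk_add_mk, longRoot_add_shortRoot hxy hyz hxz, ← Int.cast_add] at h
  refine ⟨y, z, hyz, _, h (shortRoot_mem_PhiD43 hyz _), ?_⟩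
  rw [sum_fin_three_eq g hxy hyz hxz] at hg
  omega

theorem exists_longRoot_mem_of_two_classes (hrefl : ∀ x ∈ Δ, ∀ y ∈ Δ, reflA x y ∈ Δ)
    (hclosed : IsClosedIn PhiD43 Δ) {p q w : Fin 3} (hpq : p ≠ q) (hqw : q ≠ w)
    (hpw : p ≠ w) {c c' d : ℤ} (hcc' : ¬ 3 ∣ c - c') (hc : (shortRoot p q, (c : ℝ)) ∈ Δ)
    (hc' : (shortRoot p q, (c' : ℝ)) ∈ Δ) (hd : (shortRoot q w, (d : ℝ)) ∈ Δ) :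
    ∃ r : ℤ, ((-1 : ℝ) • longRoot q, ((3 * r : ℤ) : ℝ)) ∈ Δ := by
  -- Reflections give the shifts `v − 2u` (`u, v ∈ {c, c'}`) in direction `(q, p)`; they meet
  -- every class mod 3, in particular the one completing `d` to a multiple of 3.
  have key : ∀ u v : ℤ, (shortRoot p q, (u : ℝ)) ∈ Δ → (shortRoot p q, (v : ℝ)) ∈ Δ →
      3 ∣ v - 2 * u + d → ∃ r : ℤ, ((-1 : ℝ) • longRoot q, ((3 * r : ℤ) : ℝ)) ∈ Δ := by
    rintro u v hu hv ⟨r, hr⟩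
    have h := hclosed _ (shortRoot_reflA_mem hrefl hpq hu hv) _ hd
    rw [Prod.mk_add_mk, shortRoot_add_shortRoot_of_eq_source hpw hqw.symm hpq, ← Int.cast_add,
      hr, ← neg_one_smul ℝ (longRoot q)] at h
    exact ⟨r, h (longRoot_mem_PhiD43 (Or.inr rfl) q r)⟩
  rcases three_dvd_cases (κ := -c) (κ' := -c') (by omega) d with h | h | h
  · exact key c c hc hc (by omega)
  · exact key c' c' hc' hc' (by omega)
  · exact key c c' hc hc' (by omega)

end Generation

theorem PsiG_maximal {g : Fin 3 → ℤ} (hg : ¬ 3 ∣ ∑ i, g i) :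
    IsMaximalClosedSubrootSystem PhiD43 (PsiG g) := by
  refine ⟨isClosedSubrootSystem_PsiG hg, fun Δ ⟨⟨_, hΔΦ, hΔne, hrefl⟩, hclosed⟩ hsub => ?_⟩
  by_contra hne
  obtain ⟨x, hxΔ, hx⟩ := Set.exists_of_ssubset (hsub.ssubset_of_ne (Ne.symm hne))
  obtain ⟨a, b, hab, c, hc, hwrong⟩ :
      ∃ a b, a ≠ b ∧ ∃ c : ℤ, (shortRoot a b, (c : ℝ)) ∈ Δ ∧ ¬ 3 ∣ c - (g a - g b) := by
    rcases PhiD43_cases (hΔΦ hxΔ) with ⟨a, b, hab, c, rfl⟩ | ⟨σ, hσ, k, r, rfl⟩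
    · exact ⟨a, b, hab, c, hxΔ, fun h => hx ((shortRoot_mem_PsiG_iff hab c).2 h)⟩
    · exact exists_not_mem_class_of_longRoot_mem hrefl hclosed hg hsub hσ hxΔ
  have hdir : ∀ p q : Fin 3, p ≠ q → ∃ c : ℤ, (shortRoot p q, (c : ℝ)) ∈ Δ := fun p q hpq =>
    ⟨g p - g q, hsub ((shortRoot_mem_PsiG_iff hpq _).2 (by simp))⟩
  refine hΔne (subset_antisymm hΔΦ (PhiD43_subset_of_forall_shortRoot_mem hclosed ?_))
  exact fun p q hpq => shortRoot_mem_of_forall_shortRoot_mem hrefl hclosed hab hdir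
    (shortRoot_mem_of_not_mem_class hrefl hsub hab hc hwrong) hpq

theorem smul_longRoot_not_mem_shortRoots {σ : ℝ} (hσ : PM σ) (k : Fin 3) :
    σ • longRoot k ∉ {v | ∃ i j : Fin 3, i ≠ j ∧ v = eps i - eps j} := by
  rintro ⟨i, j, hij, h⟩
  have h6 := inner_smul_longRoot_self hσ k
  rw [h, ← shortRoot, inner_shortRoot_self hij] at h6
  norm_num at h6

section GradientShort

variable {Ψ : Set (Euc 3 × ℝ)} (hGr : GrC Ψ = {v | ∃ i j : Fin 3, i ≠ j ∧ v = eps i - eps j})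
include hGr

theorem smul_longRoot_not_mem_of_GrC_eq {σ : ℝ} (hσ : PM σ) (k : Fin 3) (t : ℝ) :
    (σ • longRoot k, t) ∉ Ψ := fun h =>
  smul_longRoot_not_mem_shortRoots hσ k (hGr ▸ ⟨t, h⟩)

theorem exists_shortRoot_mem_of_GrC_eq (hΨΦ : Ψ ⊆ PhiD43) {p q : Fin 3} (hpq : p ≠ q) :
    ∃ c : ℤ, (shortRoot p q, (c : ℝ)) ∈ Ψ := by
  obtain ⟨t, ht⟩ : shortRoot p q ∈ GrC Ψ := hGr ▸ ⟨p, q, hpq, rfl⟩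
  obtain ⟨n, hn⟩ := exists_int_of_mem_PhiD43 (hΨΦ ht)
  exact ⟨n, hn ▸ ht⟩

end GradientShort

/-- The residue classes of the directions form a cocycle; `g` is its potential, normalised by
`g 0 = 0`. -/
theorem exists_weight_of_single_class {Ψ : Set (Euc 3 × ℝ)}
    (hrefl : ∀ x ∈ Ψ, ∀ y ∈ Ψ, reflA x y ∈ Ψ) (hclosed : IsClosedIn PhiD43 Ψ)
    (hdir : ∀ p q : Fin 3, p ≠ q → ∃ c : ℤ, (shortRoot p q, (c : ℝ)) ∈ Ψ)
    (hsingle : ∀ p q : Fin 3, p ≠ q → ∀ c c' : ℤ, (shortRoot p q, (c : ℝ)) ∈ Ψ →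
      (shortRoot p q, (c' : ℝ)) ∈ Ψ → 3 ∣ c - c') :
    ∃ g : Fin 3 → ℤ, ∀ a b, a ≠ b → ∀ n : ℤ, (shortRoot a b, (n : ℝ)) ∈ Ψ →
      3 ∣ n - (g a - g b) := by
  have : ∀ x : Fin 3, ∃ c : ℤ, x ≠ 0 → (shortRoot 0 x, (c : ℝ)) ∈ Ψ := fun x => by
    by_cases hx : x = 0
    · exact ⟨0, fun h => absurd hx h⟩
    · obtain ⟨c, hc⟩ := hdir 0 x (Ne.symm hx)
      exact ⟨c, fun _ => hc⟩
  choose c hc using this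
  refine ⟨fun x => if x = 0 then 0 else -c x, fun a b hab n hn => ?_⟩
  by_cases ha : a = 0
  · subst ha
    have := hsingle 0 b hab n (c b) hn (hc b hab.symm)
    simp only [if_pos, if_neg hab.symm]
    omega
  by_cases hb : b = 0
  · subst hb
    have := hsingle 0 a (Ne.symm ha) _ (c a)
      (shortRoot_swap_mem_of_reflA_mem hrefl hab hn) (hc a ha)
    simp only [if_pos, if_neg ha]
    omega
  have hab' : (shortRoot a b, ((-c a + c b : ℤ) : ℝ)) ∈ Ψ := by
    have h := hclosed _ (shortRoot_swap_mem_of_reflA_mem hrefl (Ne.symm ha) (hc a ha)) _ (hc b hb)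
    rw [Prod.mk_add_mk, shortRoot_add_shortRoot, ← Int.cast_add] at h
    exact h (shortRoot_mem_PhiD43 hab _)
  have := hsingle a b hab n _ hn hab'
  simp only [if_neg ha, if_neg hb]
  omega

theorem not_dvd_sum_of_forall_mem_class {Ψ : Set (Euc 3 × ℝ)} (hclosed : IsClosedIn PhiD43 Ψ)
    (hdir : ∀ p q : Fin 3, p ≠ q → ∃ c : ℤ, (shortRoot p q, (c : ℝ)) ∈ Ψ)
    (hlong : ∀ r : ℤ, ((-1 : ℝ) • longRoot 0, ((3 * r : ℤ) : ℝ)) ∉ Ψ) {g : Fin 3 → ℤ}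
    (hg : ∀ a b, a ≠ b → ∀ n : ℤ, (shortRoot a b, (n : ℝ)) ∈ Ψ → 3 ∣ n - (g a - g b)) :
    ¬ 3 ∣ ∑ i, g i := by
  intro hdvd
  obtain ⟨c₁, hc₁⟩ := hdir 0 1 (by decide)
  obtain ⟨c₂, hc₂⟩ := hdir 0 2 (by decide)
  have h₁ := hg 0 1 (by decide) c₁ hc₁
  have h₂ := hg 0 2 (by decide) c₂ hc₂
  rw [Fin.sum_univ_three] at hdvd
  obtain ⟨r, hr⟩ : 3 ∣ c₁ + c₂ := by omega
  have h := hclosed _ hc₁ _ hc₂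
  rw [Prod.mk_add_mk, shortRoot_add_shortRoot_of_eq_source (by decide) (by decide) (by decide),
    ← Int.cast_add, hr, ← neg_one_smul ℝ (longRoot 0)] at h
  exact hlong r (h (longRoot_mem_PhiD43 (Or.inr rfl) 0 r))

theorem exists_PsiG_eq_of_GrC_eq {Ψ : Set (Euc 3 × ℝ)}
    (hmax : IsMaximalClosedSubrootSystem PhiD43 Ψ)
    (hGr : GrC Ψ = {v | ∃ i j : Fin 3, i ≠ j ∧ v = eps i - eps j}) :
    ∃ g : Fin 3 → ℤ, ¬ 3 ∣ ∑ i, g i ∧ PsiG g = Ψ := by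
  obtain ⟨⟨⟨_, hΨΦ, -, hrefl⟩, hclosed⟩, hmaxi⟩ := hmax
  have hdir := fun p q (hpq : p ≠ q) => exists_shortRoot_mem_of_GrC_eq hGr hΨΦ hpq
  have hsingle : ∀ p q : Fin 3, p ≠ q → ∀ c c' : ℤ, (shortRoot p q, (c : ℝ)) ∈ Ψ →
      (shortRoot p q, (c' : ℝ)) ∈ Ψ → 3 ∣ c - c' := by
    intro p q hpq c c' hc hc'
    by_contra hcc'
    obtain ⟨w, hpw, hqw⟩ := exists_third p q
    obtain ⟨d, hd⟩ := hdir q w hqw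
    obtain ⟨r, hr⟩ := exists_longRoot_mem_of_two_classes hrefl hclosed hpq hqw hpw hcc' hc hc' hd
    exact smul_longRoot_not_mem_of_GrC_eq hGr (Or.inr rfl) q _ hr
  obtain ⟨g, hg⟩ := exists_weight_of_single_class hrefl hclosed hdir hsingle
  have hsum := not_dvd_sum_of_forall_mem_class hclosed hdir
    (fun r => smul_longRoot_not_mem_of_GrC_eq hGr (Or.inr rfl) 0 _) hg
  refine ⟨g, hsum, hmaxi _ (isClosedSubrootSystem_PsiG hsum) fun x hx => ?_⟩
  rcases PhiD43_cases (hΨΦ hx) with ⟨a, b, hab, c, rfl⟩ | ⟨σ, hσ, k, r, rfl⟩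
  · exact (shortRoot_mem_PsiG_iff hab c).2 (hg a b hab c hx)
  · exact absurd hx (smul_longRoot_not_mem_of_GrC_eq hGr hσ k _)

theorem exists_dvd_sub_of_not_dvd_sum {g : Fin 3 → ℤ} (hg : ¬ 3 ∣ ∑ i, g i) :
    ∃ i j k : Fin 3, i ≠ j ∧ j ≠ k ∧ i ≠ k ∧ 3 ∣ g i - g j ∧ ¬ 3 ∣ g j - g k := by
  rw [Fin.sum_univ_three] at hg
  by_cases h01 : 3 ∣ g 0 - g 1
  · exact ⟨0, 1, 2, by decide, by decide, by decide, h01, by omega⟩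
  rcases three_dvd_cases (κ := -g 0) (κ' := -g 1) (by omega) (g 2) with h | h | h
  · exact ⟨2, 0, 1, by decide, by decide, by decide, by omega, h01⟩
  · exact ⟨2, 1, 0, by decide, by decide, by decide, by omega, by omega⟩
  · omega

theorem PsiG_eq_PsiD43 {g : Fin 3 → ℤ} {i j k : Fin 3} (hij : i ≠ j) (hjk : j ≠ k) (hik : i ≠ k)
    (hgij : 3 ∣ g i - g j) {l : ℤ} (hl : g j - g k = l) (hl3 : ¬ 3 ∣ l) :
    PsiG g = PsiD43 i j k l := by
  have hg : ¬ 3 ∣ ∑ x, g x := by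
    rw [sum_fin_three_eq g hij hjk hik]
    omega
  have hplus : PsiPlusD43 i j k l ⊆ PsiG g := by
    rintro x (⟨r, rfl⟩ | ⟨r, rfl⟩ | ⟨r, rfl⟩)
    · exact (shortRoot_mem_PsiG_iff hij _).2 (by omega)
    · exact (shortRoot_mem_PsiG_iff hjk _).2 (by omega)
    · exact (shortRoot_mem_PsiG_iff hik _).2 (by omega)
  ext x
  constructor
  · intro hx
    obtain ⟨a, b, hab, c, rfl, hc⟩ := PsiG_cases hg hx
    rcases pair_eq_of_ne i j k a b hij hik hjk hab with
      ⟨rfl, rfl⟩ | ⟨rfl, rfl⟩ | ⟨rfl, rfl⟩ | ⟨rfl, rfl⟩ | ⟨rfl, rfl⟩ | ⟨rfl, rfl⟩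
    · exact Or.inl (Or.inl ⟨c / 3, by rw [show 3 * (c / 3) = c by omega]; rfl⟩)
    · refine Or.inr (Or.inl ⟨-c / 3, ?_⟩)
      rw [show 3 * (-c / 3) = -c by omega, Prod.neg_mk, neg_shortRoot, Int.cast_neg]
      rfl
    · refine Or.inl (Or.inr (Or.inr ⟨(c - l) / 3, ?_⟩))
      rw [show 3 * ((c - l) / 3) + l = c by omega]
      rfl
    · refine Or.inr (Or.inr (Or.inr ⟨(-c - l) / 3, ?_⟩))
      rw [show 3 * ((-c - l) / 3) + l = -c by omega, Prod.neg_mk, neg_shortRoot, Int.cast_neg]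
      rfl
    · refine Or.inl (Or.inr (Or.inl ⟨(c - l) / 3, ?_⟩))
      rw [show 3 * ((c - l) / 3) + l = c by omega]
      rfl
    · refine Or.inr (Or.inr (Or.inl ⟨(-c - l) / 3, ?_⟩))
      rw [show 3 * ((-c - l) / 3) + l = -c by omega, Prod.neg_mk, neg_shortRoot, Int.cast_neg]
      rfl
  · rintro (hx | hx)
    · exact hplus hx
    · simpa using neg_mem_PsiG (hplus hx)

theorem not_closed_GrC_PsiD43 {i j k : Fin 3} (hij : i ≠ j) (hjk : j ≠ k) (hik : i ≠ k) (l : ℤ)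
    (hGr : GrC (PsiD43 i j k l) = {v | ∃ i j : Fin 3, i ≠ j ∧ v = eps i - eps j}) :
    ¬ ∀ u ∈ GrC (PsiD43 i j k l), ∀ v ∈ GrC (PsiD43 i j k l),
      u + v ∈ GrC PhiD43 → u + v ∈ GrC (PsiD43 i j k l) := by
  intro hcl
  have hu : shortRoot i j ∈ GrC (PsiD43 i j k l) := ⟨_, Or.inl (Or.inl ⟨0, rfl⟩)⟩
  have hv : shortRoot i k ∈ GrC (PsiD43 i j k l) := ⟨_, Or.inl (Or.inr (Or.inr ⟨0, rfl⟩))⟩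
  have hsum : shortRoot i j + shortRoot i k = (-1 : ℝ) • longRoot i := by
    rw [shortRoot_add_shortRoot_of_eq_source hjk hik.symm hij.symm, neg_one_smul]
  have h := hcl _ hu _ hv
  rw [hsum] at h
  exact smul_longRoot_not_mem_shortRoots (Or.inr rfl) i
    (hGr ▸ h ⟨_, longRoot_mem_PhiD43 (Or.inr rfl) i 0⟩)

/-- `Ψ` is a maximal closed subroot system of the affine root
system of type `D_4^{(3)}` with gradient not closed in the gradient root system iff
`Gr(Ψ) = {ε_i − ε_j : i ≠ j}` and `Ψ = Ψ(i,j,k;ℓ)` for a permutation `(i,j,k)` of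
`(1,2,3)` and some `ℓ ≢ 0 (mod 3)`. -/
theorem statement15 (Ψ : Set (Euc 3 × ℝ)) :
    (IsMaximalClosedSubrootSystem PhiD43 Ψ ∧
      ¬ (∀ u ∈ GrC Ψ, ∀ v ∈ GrC Ψ, u + v ∈ GrC PhiD43 → u + v ∈ GrC Ψ)) ↔
      (GrC Ψ = {v | ∃ i j : Fin 3, i ≠ j ∧ v = eps i - eps j} ∧
        ∃ (i j k : Fin 3) (l : ℤ), i ≠ j ∧ j ≠ k ∧ i ≠ k ∧ ¬ ((3 : ℤ) ∣ l) ∧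
          Ψ = PsiD43 i j k l) := by
  constructor
  · rintro ⟨hmax, hng⟩
    have hGr := GrC_eq_of_not_closed hmax.1.1.2.1 hmax.1.1.2.2.2 hng
    obtain ⟨g, hg, rfl⟩ := exists_PsiG_eq_of_GrC_eq hmax hGr
    obtain ⟨i, j, k, hij, hjk, hik, hgij, hgjk⟩ := exists_dvd_sub_of_not_dvd_sum hg
    exact ⟨hGr, i, j, k, _, hij, hjk, hik, hgjk, PsiG_eq_PsiD43 hij hjk hik hgij rfl hgjk⟩
  · rintro ⟨hGr, i, j, k, l, hij, hjk, hik, hl, rfl⟩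
    have hPsi : PsiG (fun x => if x = k then -l else 0) = PsiD43 i j k l :=
      PsiG_eq_PsiD43 hij hjk hik (by simp [hik, hjk]) (by simp [hjk]) hl
    refine ⟨hPsi ▸ PsiG_maximal ?_, not_closed_GrC_PsiD43 hij hjk hik l hGr⟩
    rw [sum_fin_three_eq _ hij hjk hik]
    simpa [hik, hjk] using hl
end
end

section
/- If p : 𝒟_4 → ℤ is ℤ-linear and exactly two of the four integers p(ε_1), p(ε_2), p(ε_3), p(ε_4) are even, then Ψ_p is a maximal closed subroot system of Φ, the affine root system of type E_6^{(2)}. -/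
noncomputable section

variable {V : Type*} [NormedAddCommGroup V] [InnerProductSpace ℝ V]

/-- The affine root system of type `E_6^{(2)}`. -/
def PhiE62 : Set (Euc 4 × ℝ) :=
  {x | (∃ i : Fin 4, ∃ σ : ℝ, PM σ ∧ ∃ r : ℤ, x = (σ • eps i, (r : ℝ))) ∨
       (∃ i j : Fin 4, i ≠ j ∧ ∃ σ τ : ℝ, PM σ ∧ PM τ ∧ ∃ r : ℤ,
          x = (σ • eps i + τ • eps j, ((2 * r : ℤ) : ℝ))) ∨
       (∃ lam : Fin 4 → ℝ, (∀ i, PM (lam i)) ∧ ∃ r : ℤ,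
          x = ((2⁻¹ : ℝ) • ∑ i, lam i • eps i, (r : ℝ)))}

/-- The root system `𝒟_4` of type `D_4` inside `F_4`. -/
def D4set : Set (Euc 4) :=
  {v | (∃ i : Fin 4, ∃ σ : ℝ, PM σ ∧ v = σ • eps i) ∨
       (∃ lam : Fin 4 → ℝ, (∀ i, PM (lam i)) ∧
          v = (2⁻¹ : ℝ) • ∑ i, lam i • eps i)}

/-- The subset `Ψ_p` of `E_6^{(2)}` attached to a `ℤ`-linear `p : 𝒟_4 → ℤ`. -/
def PsiPE62 (p : Euc 4 → ℤ) : Set (Euc 4 × ℝ) :=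
  {x | (∃ v ∈ D4set, ∃ r : ℤ, x = (v, ((p v + 2 * r : ℤ) : ℝ))) ∨
       (∃ i j : Fin 4, i ≠ j ∧ Int.ModEq 2 (p (eps i)) (p (eps j)) ∧
          ∃ σ τ : ℝ, PM σ ∧ PM τ ∧ ∃ r : ℤ,
            x = (σ • eps i + τ • eps j, ((2 * r : ℤ) : ℝ)))}

/-- Exactly two of `p(ε_1), …, p(ε_4)` are even. -/
def ExactlyTwoEven (p : Euc 4 → ℤ) : Prop :=
  (Finset.univ.filter fun i : Fin 4 => p (eps i) % 2 = 0).card = 2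

/-
Doubling coordinates identifies `Φ` with a set of pairs `(b, m) ∈ ℤ⁴ × ℤ`, and `Ψ_p` with those
roots on which the additive functional `2m - b ⬝ P`, `P i = p(ε_i)`, is divisible by `4`.
Additivity makes `Ψ_p` closed, and since `s_x y = y - n x` with `n ∈ ℤ` it is also stable under
reflections. The functional is even on `Φ` (because `∑ P i = 2 p((ε_1 + ⋯ + ε_4)/2)`), so if
`x, y ∈ Φ ∖ Ψ_p` and `y - x ∈ Φ`, then `y - x ∈ Ψ_p`; hence a closed `Δ ⊇ Ψ_p` containing `x`
contains `y = x + (y - x)`. Any two roots outside `Ψ_p` are joined by such steps whose differences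
are roots `(±ε_1 ± ε_2 ± ε_3 ± ε_4)/2 + cδ`, so a closed `Δ ⊋ Ψ_p` is all of `Φ`.
-/

open Matrix

namespace E62

/-! Doubled coordinates: `b : Fin 4 → ℤ` stands for `b / 2 ∈ ℝ⁴`, and `(b, m)` for the affine
root `b / 2 + m δ`. -/

def IsShort (b : Fin 4 → ℤ) : Prop := ∃ i, (b i = 2 ∨ b i = -2) ∧ ∀ k, k ≠ i → b k = 0

def IsLong (b : Fin 4 → ℤ) : Prop :=
  ∃ i j, i ≠ j ∧ (b i = 2 ∨ b i = -2) ∧ (b j = 2 ∨ b j = -2) ∧ ∀ k, k ≠ i → k ≠ j → b k = 0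

def IsHalf (b : Fin 4 → ℤ) : Prop := ∀ k, b k = 1 ∨ b k = -1

instance : DecidablePred IsShort := fun _ => by unfold IsShort; infer_instance
instance : DecidablePred IsLong := fun _ => by unfold IsLong; infer_instance
instance : DecidablePred IsHalf := fun _ => by unfold IsHalf; infer_instance

def IsAffineRoot (x : (Fin 4 → ℤ) × ℤ) : Prop :=
  IsShort x.1 ∨ IsHalf x.1 ∨ (IsLong x.1 ∧ Even x.2)

/-- With `P i = p(ε_i)`, `Ψ_p` consists of the affine roots on which `defect P` is divisible
by `4`. -/
def defect (P : Fin 4 → ℤ) : (Fin 4 → ℤ) × ℤ →+ ℤ where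
  toFun x := 2 * x.2 - x.1 ⬝ᵥ P
  map_zero' := by simp
  map_add' x y := by simp only [Prod.fst_add, Prod.snd_add, add_dotProduct]; ring

def IsPsiRoot (P : Fin 4 → ℤ) (x : (Fin 4 → ℤ) × ℤ) : Prop :=
  IsAffineRoot x ∧ 4 ∣ defect P x

lemma defect_apply (P : Fin 4 → ℤ) (x : (Fin 4 → ℤ) × ℤ) : defect P x = 2 * x.2 - x.1 ⬝ᵥ P :=
  rfl

variable {P b h : Fin 4 → ℤ} {x y : (Fin 4 → ℤ) × ℤ}

def cartanPairInt (g h : Fin 4 → ℤ) : ℤ := 2 * (h ⬝ᵥ g) / (g ⬝ᵥ g)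

def reflect (x y : (Fin 4 → ℤ) × ℤ) : (Fin 4 → ℤ) × ℤ := y - cartanPairInt x.1 y.1 • x

lemma IsShort.exists_eq_single (hb : IsShort b) :
    ∃ i a, (a = 2 ∨ a = -2) ∧ b = Pi.single i a := by
  obtain ⟨i, hi, h0⟩ := hb
  refine ⟨i, b i, hi, funext fun k => ?_⟩
  by_cases hk : k = i
  · subst hk; simp
  · simp [hk, h0 k hk]

lemma IsLong.exists_eq_single_add_single (hb : IsLong b) :
    ∃ i j a c, i ≠ j ∧ (a = 2 ∨ a = -2) ∧ (c = 2 ∨ c = -2) ∧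
      b = Pi.single i a + Pi.single j c := by
  obtain ⟨i, j, hij, hi, hj, h0⟩ := hb
  refine ⟨i, j, b i, b j, hij, hi, hj, funext fun k => ?_⟩
  by_cases hki : k = i
  · subst hki; simp [hij]
  by_cases hkj : k = j
  · subst hkj; simp [hki]
  simp [hki, hkj, h0 k hki hkj]

lemma isShort_single (i : Fin 4) {a : ℤ} (ha : a = 2 ∨ a = -2) : IsShort (Pi.single i a) :=
  ⟨i, by simpa using ha, fun k hk => by simp [hk]⟩

lemma isLong_single_add_single {i j : Fin 4} (hij : i ≠ j) {a c : ℤ} (ha : a = 2 ∨ a = -2)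
    (hc : c = 2 ∨ c = -2) : IsLong (Pi.single i a + Pi.single j c) :=
  ⟨i, j, hij, by simpa [hij] using ha, by simpa [hij.symm] using hc,
    fun k hki hkj => by simp [hki, hkj]⟩

def f4Roots : List (Fin 4 → ℤ) :=
  [![2,0,0,0], ![-2,0,0,0], ![0,2,0,0], ![0,-2,0,0], ![0,0,2,0], ![0,0,-2,0], ![0,0,0,2],
   ![0,0,0,-2], ![2,2,0,0], ![2,-2,0,0], ![-2,2,0,0], ![-2,-2,0,0], ![2,0,2,0], ![2,0,-2,0],
   ![-2,0,2,0], ![-2,0,-2,0], ![2,0,0,2], ![2,0,0,-2], ![-2,0,0,2], ![-2,0,0,-2], ![0,2,2,0],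
   ![0,2,-2,0], ![0,-2,2,0], ![0,-2,-2,0], ![0,2,0,2], ![0,2,0,-2], ![0,-2,0,2], ![0,-2,0,-2],
   ![0,0,2,2], ![0,0,2,-2], ![0,0,-2,2], ![0,0,-2,-2], ![1,1,1,1], ![1,1,1,-1], ![1,1,-1,1],
   ![1,1,-1,-1], ![1,-1,1,1], ![1,-1,1,-1], ![1,-1,-1,1], ![1,-1,-1,-1], ![-1,1,1,1],
   ![-1,1,1,-1], ![-1,1,-1,1], ![-1,1,-1,-1], ![-1,-1,1,1], ![-1,-1,1,-1], ![-1,-1,-1,1],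
   ![-1,-1,-1,-1]]

lemma mem_f4Roots (hb : IsShort b ∨ IsHalf b ∨ IsLong b) : b ∈ f4Roots := by
  rcases hb with hb | hb | hb
  · obtain ⟨i, a, ha, rfl⟩ := hb.exists_eq_single
    fin_cases i <;> rcases ha with rfl | rfl <;> decide
  · have hb' : b = ![b 0, b 1, b 2, b 3] := funext fun k => by fin_cases k <;> rfl
    rw [hb']
    rcases hb 0 with h0 | h0 <;> rcases hb 1 with h1 | h1 <;> rcases hb 2 with h2 | h2 <;>
      rcases hb 3 with h3 | h3 <;> rw [h0, h1, h2, h3] <;> decide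
  · obtain ⟨i, j, a, c, hij, ha, hc, rfl⟩ := hb.exists_eq_single_add_single
    fin_cases i <;> fin_cases j <;> rcases ha with rfl | rfl <;> rcases hc with rfl | rfl <;>
      first | exact absurd rfl hij | decide

set_option maxRecDepth 100000 in
/-- The last conjunct is what keeps the level of a reflected long affine root even. -/
lemma f4Roots_reflect : ∀ g ∈ f4Roots, g ⬝ᵥ g ≠ 0 ∧ ∀ h ∈ f4Roots,
    g ⬝ᵥ g ∣ 2 * (h ⬝ᵥ g) ∧
    (IsShort (h - cartanPairInt g h • g) ∨ IsHalf (h - cartanPairInt g h • g) ∨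
      (IsLong (h - cartanPairInt g h • g) ∧ IsLong h ∧ (Even (cartanPairInt g h) ∨ IsLong g))) := by
  simp only [cartanPairInt, dotProduct, Fin.sum_univ_four]
  decide +kernel

lemma IsLong.not_isShort (hb : IsLong b) : ¬IsShort b := by
  obtain ⟨i, j, hij, hi, hj, -⟩ := hb
  rintro ⟨k, -, hk⟩
  by_cases hik : i = k
  · subst hik; have := hk j hij.symm; omega
  · have := hk i hik; omega

lemma IsLong.not_isHalf (hb : IsLong b) : ¬IsHalf b := by
  obtain ⟨i, -, -, hi, -⟩ := hb
  intro h
  have := h i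
  omega

lemma IsAffineRoot.even_of_isLong (hx : IsAffineRoot x)
    (hl : IsLong x.1) : Even x.2 := by
  rcases hx with hs | hh | ⟨-, he⟩
  · exact absurd hs hl.not_isShort
  · exact absurd hh hl.not_isHalf
  · exact he

lemma IsAffineRoot.mem_f4Roots (hx : IsAffineRoot x) : x.1 ∈ f4Roots :=
  E62.mem_f4Roots (hx.imp_right (Or.imp_right And.left))

lemma IsAffineRoot.dotProduct_self_ne_zero (hx : IsAffineRoot x) :
    x.1 ⬝ᵥ x.1 ≠ 0 :=
  (f4Roots_reflect _ hx.mem_f4Roots).1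

lemma cartanPairInt_mul_dotProduct_self (hx : IsAffineRoot x)
    (hy : IsAffineRoot y) : cartanPairInt x.1 y.1 * (x.1 ⬝ᵥ x.1) = 2 * (y.1 ⬝ᵥ x.1) :=
  Int.ediv_mul_cancel ((f4Roots_reflect _ hx.mem_f4Roots).2 _ hy.mem_f4Roots).1

lemma IsAffineRoot.reflect (hx : IsAffineRoot x) (hy : IsAffineRoot y) :
    IsAffineRoot (reflect x y) := by
  rcases ((f4Roots_reflect _ hx.mem_f4Roots).2 _ hy.mem_f4Roots).2 with hs | hh | ⟨hl, hyl, hn⟩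
  · exact Or.inl hs
  · exact Or.inr (Or.inl hh)
  refine Or.inr (Or.inr ⟨hl, ?_⟩)
  have hnx : Even (cartanPairInt x.1 y.1 * x.2) := by
    rcases hn with hn | hxl
    · exact hn.mul_right _
    · exact (hx.even_of_isLong hxl).mul_left _
  simpa [E62.reflect] using (hy.even_of_isLong hyl).sub hnx

lemma defect_reflect (P : Fin 4 → ℤ) (x y : (Fin 4 → ℤ) × ℤ) :
    defect P (reflect x y) = defect P y - cartanPairInt x.1 y.1 * defect P x := by
  rw [E62.reflect, map_sub, map_zsmul, smul_eq_mul]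

lemma IsPsiRoot.reflect (hx : IsPsiRoot P x)
    (hy : IsPsiRoot P y) : IsPsiRoot P (reflect x y) :=
  ⟨hx.1.reflect hy.1, defect_reflect P x y ▸ dvd_sub hy.2 (dvd_mul_of_dvd_right hx.2 _)⟩

lemma IsPsiRoot.add (hx : IsPsiRoot P x)
    (hy : IsPsiRoot P y) (hxy : IsAffineRoot (x + y)) : IsPsiRoot P (x + y) :=
  ⟨hxy, (map_add (defect P) x y).symm ▸ dvd_add hx.2 hy.2⟩

lemma IsHalf.neg (hh : IsHalf h) : IsHalf (-h) := fun k => by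
  rcases hh k with hk | hk <;> simp [hk]

lemma IsHalf.sub_single (hh : IsHalf h) (i : Fin 4) :
    IsHalf (h - Pi.single i (2 * h i)) := fun k => by
  by_cases hk : k = i
  · subst hk; rcases hh k with h' | h' <;> simp [h']
  · simpa [hk] using hh k

lemma IsHalf.isShort_single (hh : IsHalf h) (i : Fin 4) :
    IsShort (Pi.single i (2 * h i)) :=
  E62.isShort_single i (by rcases hh i with h' | h' <;> simp [h'])

lemma IsShort.coord (hb : IsShort b) (k : Fin 4) :
    b k = 0 ∨ b k = 2 ∨ b k = -2 := by
  obtain ⟨i, hi, h0⟩ := hb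
  by_cases hk : k = i
  · subst hk; omega
  · exact Or.inl (h0 k hk)

lemma IsLong.coord (hb : IsLong b) (k : Fin 4) :
    b k = 0 ∨ b k = 2 ∨ b k = -2 := by
  obtain ⟨i, j, -, hi, hj, h0⟩ := hb
  by_cases hki : k = i
  · subst hki; omega
  by_cases hkj : k = j
  · subst hkj; omega
  exact Or.inl (h0 k hki hkj)

lemma exists_isHalf_sub (hb : ∀ k, b k = 0 ∨ b k = 2 ∨ b k = -2) :
    ∃ h, IsHalf h ∧ IsHalf (b - h) :=
  ⟨fun k => if b k = 0 then 1 else b k / 2,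
    fun k => by rcases hb k with hk | hk | hk <;> simp [hk],
    fun k => by rcases hb k with hk | hk | hk <;> simp [hk]⟩

lemma even_dotProduct (hP : Even (∑ i, P i))
    (hb : IsShort b ∨ IsHalf b ∨ IsLong b) : Even (b ⬝ᵥ P) := by
  rcases hb with hb | hb | hb
  · obtain ⟨i, a, ha, rfl⟩ := hb.exists_eq_single
    rw [single_dotProduct]
    exact (show Even a by rcases ha with rfl | rfl <;> decide).mul_right _
  · rw [Fin.sum_univ_four] at hP
    simp only [dotProduct, Fin.sum_univ_four, Int.even_iff] at hP ⊢
    rcases hb 0 with h0 | h0 <;> rcases hb 1 with h1 | h1 <;> rcases hb 2 with h2 | h2 <;>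
      rcases hb 3 with h3 | h3 <;> simp only [h0, h1, h2, h3] <;> omega
  · obtain ⟨i, j, a, c, -, ha, hc, rfl⟩ := hb.exists_eq_single_add_single
    rw [add_dotProduct, single_dotProduct, single_dotProduct, Int.even_iff]
    rcases ha with rfl | rfl <;> rcases hc with rfl | rfl <;> omega

lemma even_defect (hP : Even (∑ i, P i)) (hx : IsAffineRoot x) : Even (defect P x) :=
  (even_two_mul _).sub (even_dotProduct hP (hx.imp_right (Or.imp_right And.left)))

lemma exists_not_dvd_defect (hP : Even (∑ i, P i)) (hb : IsShort b ∨ IsHalf b) :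
    ∃ c, ¬4 ∣ defect P (b, c) := by
  obtain ⟨t, ht⟩ := even_dotProduct hP (hb.imp_right Or.inl)
  exact ⟨t + 1, by simp only [defect_apply]; omega⟩

lemma not_dvd_defect_single (P : Fin 4 → ℤ) (i : Fin 4) {s : ℤ} (hs : s = 1 ∨ s = -1) :
    ¬4 ∣ defect P (Pi.single i (2 * s), P i + 1) := by
  simp only [defect_apply, single_dotProduct]
  rcases hs with rfl | rfl <;> omega

section Maximality

variable {D : Set ((Fin 4 → ℤ) × ℤ)} (hP : Even (∑ i, P i))
  (hΨ : ∀ x, IsPsiRoot P x → x ∈ D) (hD : ∀ x ∈ D, ∀ y ∈ D, IsAffineRoot (x + y) → x + y ∈ D)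
include hP hΨ hD

/-- Since `defect P` is even on affine roots, the difference of two roots outside `Ψ` has
`defect` divisible by `4`, so it lies in `Ψ ⊆ D` whenever it is a root. -/
lemma mem_of_isHalf_sub (hx : x ∈ D) (hxΦ : IsAffineRoot x)
    (hxΨ : ¬4 ∣ defect P x) (hyΦ : IsAffineRoot y) (hyΨ : ¬4 ∣ defect P y)
    (hxy : IsHalf (y.1 - x.1)) : y ∈ D := by
  have hsub : IsPsiRoot P (y - x) := by
    refine ⟨Or.inr (Or.inl hxy), ?_⟩
    obtain ⟨s, hs⟩ := even_defect hP hxΦ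
    obtain ⟨t, ht⟩ := even_defect hP hyΦ
    rw [map_sub]
    omega
  simpa using hD x hx (y - x) (hΨ _ hsub) (by simpa using hyΦ)

lemma mem_of_isHalf {h h' : Fin 4 → ℤ} {c c' : ℤ} (hmem : (h, c) ∈ D) (hh : IsHalf h)
    (hc : ¬4 ∣ defect P (h, c)) (hh' : IsHalf h') (hc' : ¬4 ∣ defect P (h', c')) :
    (h', c') ∈ D := by
  have short_mem : ∀ {g d}, (g, d) ∈ D → IsHalf g → ¬4 ∣ defect P (g, d) → ∀ i,
      (Pi.single i (2 * g i), P i + 1) ∈ D := fun hgd hg hd i =>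
    mem_of_isHalf_sub hP hΨ hD hgd (Or.inr (Or.inl hg)) hd (Or.inl (hg.isShort_single i))
      (not_dvd_defect_single P i (hg i)) (by simpa using (hg.sub_single i).neg)
  have half_mem : ∀ {g d} i, (Pi.single i (2 * g i), P i + 1) ∈ D → IsHalf g →
      ¬4 ∣ defect P (g, d) → (g, d) ∈ D := fun i hgd hg hd =>
    mem_of_isHalf_sub hP hΨ hD hgd (Or.inl (hg.isShort_single i))
      (not_dvd_defect_single P i (hg i)) (Or.inr (Or.inl hg)) hd (hg.sub_single i)
  -- `h` and `h'` may differ in every coordinate: pass through short roots and through `g`,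
  -- which shares coordinate `0` with `h` and coordinate `1` with `h'`
  set g := Function.update h' 0 (h 0)
  have hg : IsHalf g := fun k => by
    by_cases hk : k = 0
    · subst hk; simpa [g] using hh 0
    · simpa [g, hk] using hh' k
  obtain ⟨d, hd⟩ := exists_not_dvd_defect hP (Or.inr hg)
  have hgd : (g, d) ∈ D := half_mem 0 (by simpa [g] using short_mem hmem hh hc 0) hg hd
  exact half_mem 1 (by simpa [g] using short_mem hgd hg hd 1) hh' hc'

lemma exists_isHalf_mem (hx : x ∈ D) (hxΦ : IsAffineRoot x)
    (hxΨ : ¬4 ∣ defect P x) : ∃ h c, (h, c) ∈ D ∧ IsHalf h ∧ ¬4 ∣ defect P (h, c) := by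
  by_cases hxh : IsHalf x.1
  · exact ⟨x.1, x.2, hx, hxh, hxΨ⟩
  obtain ⟨h, hh, hxh'⟩ : ∃ h, IsHalf h ∧ IsHalf (x.1 - h) := by
    refine exists_isHalf_sub fun k => ?_
    rcases hxΦ with hs | hh | ⟨hl, -⟩
    exacts [hs.coord k, absurd hh hxh, hl.coord k]
  obtain ⟨c, hc⟩ := exists_not_dvd_defect hP (Or.inr hh)
  exact ⟨h, c, mem_of_isHalf_sub hP hΨ hD hx hxΦ hxΨ (Or.inr (Or.inl hh)) hc
    (by simpa using hxh'.neg), hh, hc⟩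

theorem isAffineRoot_subset (hx : x ∈ D) (hxΦ : IsAffineRoot x)
    (hxΨ : ¬4 ∣ defect P x) : {y | IsAffineRoot y} ⊆ D := by
  obtain ⟨h, c, hmem, hh, hc⟩ := exists_isHalf_mem hP hΨ hD hx hxΦ hxΨ
  rintro ⟨b, m⟩ hy
  by_cases hyΨ : 4 ∣ defect P (b, m)
  · exact hΨ _ ⟨hy, hyΨ⟩
  by_cases hb : IsHalf b
  · exact mem_of_isHalf hP hΨ hD hmem hh hc hb hyΨ
  obtain ⟨g, hg, hbg⟩ : ∃ g, IsHalf g ∧ IsHalf (b - g) := by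
    refine exists_isHalf_sub fun k => ?_
    rcases hy with hs | hh | ⟨hl, -⟩
    exacts [hs.coord k, absurd hh hb, hl.coord k]
  obtain ⟨d, hd⟩ := exists_not_dvd_defect hP (Or.inr hg)
  exact mem_of_isHalf_sub hP hΨ hD (mem_of_isHalf hP hΨ hD hmem hh hc hg hd)
    (Or.inr (Or.inl hg)) hd hy hyΨ hbg

end Maximality

def half : (Fin 4 → ℤ) →+ Euc 4 where
  toFun b := WithLp.toLp 2 fun k => (b k : ℝ) / 2
  map_zero' := by ext; simp
  map_add' b c := by ext; simp [add_div]

def toAffine : (Fin 4 → ℤ) × ℤ →+ Euc 4 × ℝ := half.prodMap (Int.castAddHom ℝ)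

lemma half_apply (b : Fin 4 → ℤ) (k : Fin 4) : half b k = (b k : ℝ) / 2 := rfl

lemma toAffine_apply (x : (Fin 4 → ℤ) × ℤ) : toAffine x = (half x.1, (x.2 : ℝ)) := rfl

lemma half_injective : Function.Injective half := fun b c h => funext fun k => by
  have := congrArg (· k) h
  simp only [half_apply] at this
  exact_mod_cast (div_left_inj' two_ne_zero).1 this

lemma toAffine_injective : Function.Injective toAffine :=
  half_injective.prodMap Int.cast_injective

lemma inner_half (b c : Fin 4 → ℤ) : inner ℝ (half b) (half c) = ((b ⬝ᵥ c : ℤ) : ℝ) / 4 := by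
  simp only [PiLp.inner_apply, half_apply, dotProduct, Int.cast_sum, Int.cast_mul,
    Finset.sum_div, RCLike.inner_apply, conj_trivial]
  exact Finset.sum_congr rfl fun k _ => by ring

lemma half_single (i : Fin 4) (e : ℤ) : half (Pi.single i (2 * e)) = (e : ℝ) • eps i := by
  ext k
  by_cases hk : k = i
  · subst hk; simp [half_apply, eps]
  · simp [half_apply, eps, hk]

lemma half_eq_smul_sum (b : Fin 4 → ℤ) : half b = (2⁻¹ : ℝ) • ∑ i, (b i : ℝ) • eps i := by
  ext k
  simp [half_apply, eps, div_eq_inv_mul, Pi.single_apply]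

lemma exists_intCast_of_PM {σ : ℝ} (h : PM σ) : ∃ e : ℤ, (e = 1 ∨ e = -1) ∧ (e : ℝ) = σ := by
  rcases h with rfl | rfl
  exacts [⟨1, Or.inl rfl, by norm_num⟩, ⟨-1, Or.inr rfl, by norm_num⟩]

lemma PM_intCast {e : ℤ} (he : e = 1 ∨ e = -1) : PM (e : ℝ) := by
  rcases he with rfl | rfl <;> norm_num [PM]

lemma exists_eq_two_mul {a : ℤ} (ha : a = 2 ∨ a = -2) :
    ∃ e : ℤ, (e = 1 ∨ e = -1) ∧ a = 2 * e := by
  rcases ha with rfl | rfl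
  exacts [⟨1, Or.inl rfl, rfl⟩, ⟨-1, Or.inr rfl, rfl⟩]

lemma mem_D4set_iff {v : Euc 4} : v ∈ D4set ↔ ∃ b, (IsShort b ∨ IsHalf b) ∧ half b = v := by
  constructor
  · rintro (⟨i, σ, hσ, rfl⟩ | ⟨lam, hlam, rfl⟩)
    · obtain ⟨e, he, rfl⟩ := exists_intCast_of_PM hσ
      exact ⟨Pi.single i (2 * e), Or.inl (isShort_single i (by omega)), half_single i e⟩
    · choose e he hlam_eq using fun k => exists_intCast_of_PM (hlam k)
      exact ⟨e, Or.inr he, by simp [half_eq_smul_sum, hlam_eq]⟩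
  · rintro ⟨b, hb | hb, rfl⟩
    · obtain ⟨i, a, ha, rfl⟩ := hb.exists_eq_single
      obtain ⟨e, he, rfl⟩ := exists_eq_two_mul ha
      exact Or.inl ⟨i, e, PM_intCast he, half_single i e⟩
    · exact Or.inr ⟨fun k => b k, fun k => PM_intCast (hb k), half_eq_smul_sum b⟩

lemma two_mul_apply_half {p : Euc 4 → ℤ} (hp : IsZLinearOn D4set p)
    (hb : IsShort b ∨ IsHalf b) : 2 * p (half b) = b ⬝ᵥ fun i => p (eps i) := by
  obtain ⟨f, hf⟩ := hp
  have heps : ∀ i, eps i ∈ D4set := fun i => Or.inl ⟨i, 1, Or.inl rfl, (one_smul ℝ _).symm⟩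
  have hbmem : half b ∈ D4set := mem_D4set_iff.2 ⟨b, hb, rfl⟩
  have key : (2 : ℤ) • (⟨half b, AddSubgroup.subset_closure hbmem⟩ : AddSubgroup.closure D4set) =
      ∑ i, b i • ⟨eps i, AddSubgroup.subset_closure (heps i)⟩ := by
    ext k
    simp [half_apply, eps, Pi.single_apply, mul_div_cancel₀]
  have := congrArg f key
  simp only [map_zsmul, map_sum, smul_eq_mul] at this
  simpa [dotProduct, hf _ hbmem, fun i => hf (eps i) (heps i)] using this

lemma toAffine_long {i j : Fin 4} (e f r : ℤ) :
    toAffine (Pi.single i (2 * e) + Pi.single j (2 * f), 2 * r) =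
      ((e : ℝ) • eps i + (f : ℝ) • eps j, ((2 * r : ℤ) : ℝ)) := by
  rw [toAffine_apply, map_add, half_single, half_single]

lemma mk_mem_PhiE62 {v : Euc 4} (hv : v ∈ D4set) (r : ℤ) : (v, (r : ℝ)) ∈ PhiE62 := by
  rcases hv with ⟨i, σ, hσ, rfl⟩ | ⟨lam, hlam, rfl⟩
  exacts [Or.inl ⟨i, σ, hσ, r, rfl⟩, Or.inr (Or.inr ⟨lam, hlam, r, rfl⟩)]

lemma PhiE62_eq : PhiE62 = toAffine '' {x | IsAffineRoot x} := by
  ext x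
  constructor
  · rintro (⟨i, σ, hσ, r, rfl⟩ | ⟨i, j, hij, σ, τ, hσ, hτ, r, rfl⟩ | ⟨lam, hlam, r, rfl⟩)
    · obtain ⟨b, hb, hbv⟩ := mem_D4set_iff.1 (Or.inl ⟨i, σ, hσ, rfl⟩)
      exact ⟨(b, r), hb.imp_right Or.inl, by rw [toAffine_apply, hbv]⟩
    · obtain ⟨e, he, rfl⟩ := exists_intCast_of_PM hσ
      obtain ⟨f, hf, rfl⟩ := exists_intCast_of_PM hτ
      exact ⟨_, Or.inr (Or.inr ⟨isLong_single_add_single hij (by omega) (by omega),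
        even_two_mul r⟩), toAffine_long e f r⟩
    · obtain ⟨b, hb, hbv⟩ := mem_D4set_iff.1 (Or.inr ⟨lam, hlam, rfl⟩)
      exact ⟨(b, r), hb.imp_right Or.inl, by rw [toAffine_apply, hbv]⟩
  · rintro ⟨⟨b, m⟩, hb, rfl⟩
    obtain hsh | ⟨hl, r, rfl⟩ : (IsShort b ∨ IsHalf b) ∨ (IsLong b ∧ Even m) := or_assoc.2 hb
    · exact mk_mem_PhiE62 (mem_D4set_iff.2 ⟨b, hsh, rfl⟩) m
    · obtain ⟨i, j, a, c, hij, ha, hc, rfl⟩ := hl.exists_eq_single_add_single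
      obtain ⟨e, he, rfl⟩ := exists_eq_two_mul ha
      obtain ⟨f, hf, rfl⟩ := exists_eq_two_mul hc
      refine Or.inr (Or.inl ⟨i, j, hij, e, f, PM_intCast he, PM_intCast hf, r, ?_⟩)
      rw [← two_mul, toAffine_long]

lemma PsiPE62_eq {p : Euc 4 → ℤ} (hp : IsZLinearOn D4set p) :
    PsiPE62 p = toAffine '' {x | IsPsiRoot (fun i => p (eps i)) x} := by
  ext x
  constructor
  · rintro (⟨v, hv, r, rfl⟩ | ⟨i, j, hij, hmod, σ, τ, hσ, hτ, r, rfl⟩)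
    · obtain ⟨b, hb, rfl⟩ := mem_D4set_iff.1 hv
      refine ⟨(b, p (half b) + 2 * r), ⟨hb.imp_right Or.inl, ?_⟩, rfl⟩
      have := two_mul_apply_half hp hb
      simp only [defect_apply]
      omega
    · obtain ⟨e, he, rfl⟩ := exists_intCast_of_PM hσ
      obtain ⟨f, hf, rfl⟩ := exists_intCast_of_PM hτ
      refine ⟨_, ⟨Or.inr (Or.inr ⟨isLong_single_add_single hij (by omega) (by omega),
        even_two_mul r⟩), ?_⟩, toAffine_long e f r⟩
      rw [Int.ModEq] at hmod
      simp only [defect_apply, add_dotProduct, single_dotProduct]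
      rcases he with rfl | rfl <;> rcases hf with rfl | rfl <;> omega
  · rintro ⟨⟨b, m⟩, ⟨hb, hdvd⟩, rfl⟩
    simp only [defect_apply] at hdvd
    obtain hsh | ⟨hl, r, rfl⟩ : (IsShort b ∨ IsHalf b) ∨ (IsLong b ∧ Even m) := or_assoc.2 hb
    · have := two_mul_apply_half hp hsh
      have hm : m = p (half b) + 2 * ((m - p (half b)) / 2) := by omega
      exact Or.inl ⟨half b, mem_D4set_iff.2 ⟨b, hsh, rfl⟩, _, by rw [toAffine_apply, ← hm]⟩
    · obtain ⟨i, j, a, c, hij, ha, hc, rfl⟩ := hl.exists_eq_single_add_single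
      obtain ⟨e, he, rfl⟩ := exists_eq_two_mul ha
      obtain ⟨f, hf, rfl⟩ := exists_eq_two_mul hc
      refine Or.inr ⟨i, j, hij, ?_, e, f, PM_intCast he, PM_intCast hf, r, ?_⟩
      · rw [add_dotProduct, single_dotProduct, single_dotProduct] at hdvd
        rw [Int.ModEq]
        rcases he with rfl | rfl <;> rcases hf with rfl | rfl <;> omega
      · rw [← two_mul, toAffine_long]

lemma reflA_toAffine (hx : IsAffineRoot x) (hy : IsAffineRoot y) :
    reflA (toAffine x) (toAffine y) = toAffine (reflect x y) := by
  have hcoef : 2 * inner ℝ (half y.1) (half x.1) / inner ℝ (half x.1) (half x.1) =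
      (cartanPairInt x.1 y.1 : ℝ) := by
    have hne : ((x.1 ⬝ᵥ x.1 : ℤ) : ℝ) ≠ 0 := by exact_mod_cast hx.dotProduct_self_ne_zero
    have hmul : (cartanPairInt x.1 y.1 : ℝ) * (x.1 ⬝ᵥ x.1 : ℤ) = 2 * (y.1 ⬝ᵥ x.1 : ℤ) := by
      exact_mod_cast cartanPairInt_mul_dotProduct_self hx hy
    rw [inner_half, inner_half, div_eq_iff (by positivity)]
    linear_combination -hmul / 4
  show toAffine y - (2 * inner ℝ (half y.1) (half x.1) / inner ℝ (half x.1) (half x.1)) •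
    toAffine x = _
  rw [hcoef, reflect, map_sub, map_zsmul, Int.cast_smul_eq_zsmul]

lemma even_sum_of_isZLinearOn {p : Euc 4 → ℤ} (hp : IsZLinearOn D4set p) :
    Even (∑ i, p (eps i)) :=
  ⟨p (half 1), by simpa [two_mul, one_dotProduct] using
    (two_mul_apply_half hp (b := 1) (Or.inr fun _ => Or.inl rfl)).symm⟩

lemma isSubrootSystem_image (hP : Even (∑ i, P i)) :
    IsSubrootSystem (toAffine '' {x | IsAffineRoot x}) (toAffine '' {x | IsPsiRoot P x}) := by
  have hshort : IsPsiRoot P (Pi.single 0 2, P 0) :=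
    ⟨Or.inl (isShort_single 0 (Or.inl rfl)), by simp [defect_apply]⟩
  refine ⟨⟨_, _, hshort, rfl⟩, Set.image_mono fun x hx => hx.1, ?_, ?_⟩
  · have h1 : IsHalf 1 := fun _ => Or.inl rfl
    obtain ⟨c, hc⟩ := exists_not_dvd_defect hP (Or.inr h1)
    intro h
    obtain ⟨z, hz, hzeq⟩ : toAffine (1, c) ∈ toAffine '' {x | IsPsiRoot P x} :=
      h ▸ ⟨(1, c), Or.inr (Or.inl h1), rfl⟩
    exact hc (toAffine_injective hzeq ▸ hz.2)
  · rintro _ ⟨x, hx, rfl⟩ _ ⟨y, hy, rfl⟩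
    exact ⟨_, hx.reflect hy, (reflA_toAffine hx.1 hy.1).symm⟩

lemma isClosedIn_image :
    IsClosedIn (toAffine '' {x | IsAffineRoot x}) (toAffine '' {x | IsPsiRoot P x}) := by
  rintro _ ⟨x, hx, rfl⟩ _ ⟨y, hy, rfl⟩ ⟨z, hz, hzxy⟩
  rw [← map_add] at hzxy ⊢
  exact ⟨x + y, hx.add hy (toAffine_injective hzxy ▸ hz), rfl⟩

lemma eq_image_of_isClosedSubrootSystem (hP : Even (∑ i, P i)) {Δ : Set (Euc 4 × ℝ)}
    (hΔ : IsClosedSubrootSystem (toAffine '' {x | IsAffineRoot x}) Δ)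
    (hΨΔ : toAffine '' {x | IsPsiRoot P x} ⊆ Δ) : Δ = toAffine '' {x | IsPsiRoot P x} := by
  obtain ⟨⟨-, hΔΦ, hΔne, -⟩, hΔclosed⟩ := hΔ
  refine (hΨΔ.antisymm fun z hz => ?_).symm
  by_contra hzΨ
  obtain ⟨x, hx, rfl⟩ := hΔΦ hz
  have hclosed : ∀ a ∈ toAffine ⁻¹' Δ, ∀ b ∈ toAffine ⁻¹' Δ, IsAffineRoot (a + b) →
      a + b ∈ toAffine ⁻¹' Δ := fun a ha b hb hab => by
    simpa only [Set.mem_preimage, map_add] using hΔclosed _ ha _ hb ⟨a + b, hab, map_add _ _ _⟩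
  have hΦΔ := isAffineRoot_subset hP (fun y hy => hΨΔ ⟨y, hy, rfl⟩) hclosed hz hx
    fun h => hzΨ ⟨x, ⟨hx, h⟩, rfl⟩
  exact hΔne (hΔΦ.antisymm (Set.image_subset_iff.2 hΦΔ))

end E62

theorem statement16_general (p : Euc 4 → ℤ) (hp : IsZLinearOn D4set p) :
    IsMaximalClosedSubrootSystem PhiE62 (PsiPE62 p) := by
  have hP := E62.even_sum_of_isZLinearOn hp
  rw [E62.PhiE62_eq, E62.PsiPE62_eq hp]
  exact ⟨⟨E62.isSubrootSystem_image hP, E62.isClosedIn_image⟩,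
    fun Δ hΔ hΨΔ => E62.eq_image_of_isClosedSubrootSystem hP hΔ hΨΔ⟩

/-- If `p : 𝒟_4 → ℤ` is `ℤ`-linear and exactly two of the
`p(ε_i)` are even, then `Ψ_p` is a maximal closed subroot system of the affine root
system of type `E_6^{(2)}`. -/
theorem statement16 (p : Euc 4 → ℤ) (hp : IsZLinearOn D4set p)
    (h2 : ExactlyTwoEven p) :
    IsMaximalClosedSubrootSystem PhiE62 (PsiPE62 p) :=
  statement16_general p hp
end
end
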